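/- Let n ≥ 1, let B_{2n} be the Boolean lattice of subsets of {1,…,2n}, and let G ≤ Sym({1,…,2n}) be the subgroup of permutations preserving the partition of {1,…,2n} into the pairs {2i−1,2i} (1 ≤ i ≤ n), so G ≅ S_2 ≀ S_n. Index the facets of the quotient complex Δ(B_{2n})/G as F_1,…,F_r according to the lexicographic order of their minimal orbit-representative permutations (the unique permutation σ in each orbit {g∘σ : g ∈ G} of maximal-chain labels with σ⁻¹(2i−1) < σ⁻¹(2i) for 1 ≤ i ≤ n and σ⁻¹(2i−1) < σ⁻¹(2i+1) for 1 ≤ i ≤ n−1). Then this order is a shelling: for every l with 1 < l ≤ r and every common face of F_l and some earlier facet F_k (k < l), there exists T' ⊆ {1,…,2n−1} with |T'| = 2n−2 containing the rank set of that common face such that the face of F_l with rank set T' is also a face of some F_{k'} with k' < l. In particular, Δ(B_{2n})/(S_2 ≀ S_n) is shellable. -/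
import Mathlib


namespace Stmt3

/-- The element of `Fin (2*n)` corresponding to `2*i-1` in 1-based notation. -/
def pA {n : ℕ} (i : Fin n) : Fin (2 * n) :=
  ⟨2 * i.val, by have := i.isLt; omega⟩

/-- The element of `Fin (2*n)` corresponding to `2*i` in 1-based notation. -/
def pB {n : ℕ} (i : Fin n) : Fin (2 * n) :=
  ⟨2 * i.val + 1, by have := i.isLt; omega⟩

/-- Membership in the wreath product subgroup `S_2 ≀ S_n ≤ Sym({1,…,2n})`. -/
def IsPairPerm {n : ℕ} (g : Equiv.Perm (Fin (2 * n))) : Prop :=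
  ∀ i : Fin n, ∃ j : Fin n, ⇑g '' {pA i, pB i} = ({pA j, pB j} : Set (Fin (2 * n)))

/-- A chain in the proper part of the Boolean lattice `B_{2n}`. -/
def ProperChain (n : ℕ) (c : Set (Set (Fin (2 * n)))) : Prop :=
  IsChain (· ⊆ ·) c ∧ ∀ A ∈ c, A.Nonempty ∧ A ≠ Set.univ

/-- The rank set of a chain of subsets. -/
noncomputable def rankSet {n : ℕ} (c : Set (Set (Fin (2 * n)))) : Set ℕ :=
  Set.ncard '' c

/-- Two chains lie in the same `S_2 ≀ S_n`-orbit. -/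
def OrbEq {n : ℕ} (c c' : Set (Set (Fin (2 * n)))) : Prop :=
  ∃ g : Equiv.Perm (Fin (2 * n)), IsPairPerm g ∧ (fun A => ⇑g '' A) '' c = c'

/-- A maximal chain of the proper part of `B_{2n}`. -/
noncomputable def MaxChain (n : ℕ) (c : Set (Set (Fin (2 * n)))) : Prop :=
  ProperChain n c ∧ rankSet c = Set.Icc 1 (2 * n - 1)

/-- The subchain of `c` consisting of its members whose cardinality lies in `T`. -/
noncomputable def restrict {n : ℕ} (c : Set (Set (Fin (2 * n)))) (T : Set ℕ) :
    Set (Set (Fin (2 * n))) :=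
  {A ∈ c | A.ncard ∈ T}

/-- The chain (orbit) `σ` is a face of the facet represented by the chain `c`. -/
noncomputable def IsFaceOf {n : ℕ} (σ c : Set (Set (Fin (2 * n)))) : Prop :=
  OrbEq (restrict c (rankSet σ)) σ

/-- The maximal chain of the proper part of `B_{2n}` labelled by the
permutation `σ`: its member of cardinality `k` is `{σ(1),…,σ(k)}`. -/
def chainOf {n : ℕ} (σ : Equiv.Perm (Fin (2 * n))) : Set (Set (Fin (2 * n))) :=
  {A | ∃ k : ℕ, 1 ≤ k ∧ k ≤ 2 * n - 1 ∧ A = ⇑σ '' {x : Fin (2 * n) | (x : ℕ) < k}}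

/-- The canonical (lexicographically minimal) orbit-representative condition:
`σ⁻¹(2i-1) < σ⁻¹(2i)` for `1 ≤ i ≤ n` and `σ⁻¹(2i-1) < σ⁻¹(2i+1)` for
`1 ≤ i ≤ n-1`. -/
def IsCanonical {n : ℕ} (σ : Equiv.Perm (Fin (2 * n))) : Prop :=
  (∀ i : Fin n, σ.symm (pA i) < σ.symm (pB i)) ∧
  (∀ i j : Fin n, (j : ℕ) = (i : ℕ) + 1 → σ.symm (pA i) < σ.symm (pA j))

/-- Lexicographic comparison of one-line words of permutations. -/
def PermLexLt {n : ℕ} (σ τ : Equiv.Perm (Fin (2 * n))) : Prop :=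
  ∃ k : Fin (2 * n), (∀ j : Fin (2 * n), j < k → σ j = τ j) ∧ σ k < τ k

section L0
variable {n : ℕ}

@[simp] lemma pA_val (i : Fin n) : (pA i : ℕ) = 2 * i.val := rfl
@[simp] lemma pB_val (i : Fin n) : (pB i : ℕ) = 2 * i.val + 1 := rfl

lemma pA_inj {i j : Fin n} (h : pA i = pA j) : i = j := by
  have := congrArg Fin.val h; simp only [pA_val] at this; exact Fin.ext (by omega)

lemma pB_inj {i j : Fin n} (h : pB i = pB j) : i = j := by
  have := congrArg Fin.val h; simp only [pB_val] at this; exact Fin.ext (by omega)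

lemma pA_ne_pB (i j : Fin n) : pA i ≠ pB j := by
  intro h; have := congrArg Fin.val h; simp only [pA_val, pB_val] at this; omega

def pidx (x : Fin (2 * n)) : Fin n := ⟨x.val / 2, by have := x.isLt; omega⟩

@[simp] lemma pidx_val (x : Fin (2 * n)) : (pidx x : ℕ) = x.val / 2 := rfl

@[simp] lemma pidx_pA (i : Fin n) : pidx (pA i) = i := by
  apply Fin.ext; simp only [pidx_val, pA_val]; omega

@[simp] lemma pidx_pB (i : Fin n) : pidx (pB i) = i := by
  apply Fin.ext; simp only [pidx_val, pB_val]; omega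

lemma pa_or_pb (x : Fin (2 * n)) : x = pA (pidx x) ∨ x = pB (pidx x) := by
  rcases Nat.even_or_odd x.val with h | h
  · left; apply Fin.ext; simp only [pA_val, pidx_val]
    obtain ⟨c, hc⟩ := h; omega
  · right; apply Fin.ext; simp only [pB_val, pidx_val]
    obtain ⟨c, hc⟩ := h; omega

/-- simpler form of the pair-permutation condition -/
def PP {n : ℕ} (g : Equiv.Perm (Fin (2 * n))) : Prop :=
  ∀ i : Fin n, pidx (g (pA i)) = pidx (g (pB i))

lemma pair_set_eq {y y' : Fin (2 * n)} (hne : y ≠ y') (h : pidx y = pidx y') :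
    ({y, y'} : Set (Fin (2 * n))) = {pA (pidx y), pB (pidx y)} := by
  rcases pa_or_pb y with hy | hy <;> rcases pa_or_pb y' with hy' | hy'
  · exact absurd (hy.trans (by rw [h, ← hy'])) hne
  · rw [← h] at hy'; rw [← hy, ← hy']
  · rw [← h] at hy'; rw [Set.pair_comm, ← hy, ← hy']
  · exact absurd (hy.trans (by rw [h, ← hy'])) hne

lemma isPairPerm_of_PP {g : Equiv.Perm (Fin (2 * n))} (h : PP g) : IsPairPerm g := by
  intro i
  refine ⟨pidx (g (pA i)), ?_⟩
  rw [Set.image_pair]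
  have := pair_set_eq (y := g (pA i)) (y' := g (pB i)) (by simp [g.injective.ne_iff, pA_ne_pB]) (h i)
  rw [this]

lemma PP_of_isPairPerm {g : Equiv.Perm (Fin (2 * n))} (h : IsPairPerm g) : PP g := by
  intro i
  obtain ⟨j, hj⟩ := h i
  rw [Set.image_pair] at hj
  have h1 : g (pA i) ∈ ({pA j, pB j} : Set (Fin (2 * n))) := by
    rw [← hj]; exact Set.mem_insert _ _
  have h2 : g (pB i) ∈ ({pA j, pB j} : Set (Fin (2 * n))) := by
    rw [← hj]; exact Set.mem_insert_of_mem _ rfl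
  rcases h1 with h1 | h1 <;> rcases h2 with h2 | h2 <;> rw [h1, h2] <;> simp

lemma PP.apply {g : Equiv.Perm (Fin (2 * n))} (h : PP g) {x y : Fin (2 * n)}
    (hxy : pidx x = pidx y) : pidx (g x) = pidx (g y) := by
  rcases pa_or_pb x with hx | hx <;> rcases pa_or_pb y with hy | hy <;>
    rw [hx, hy, hxy] <;> simp [h _]

def gp (g : Equiv.Perm (Fin (2 * n))) : Fin n → Fin n := fun i => pidx (g (pA i))

lemma gp_mem (hg : PP g) (i : Fin n) :
    pA (gp g i) = g (pA i) ∨ pA (gp g i) = g (pB i) := by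
  have hset := pair_set_eq (y := g (pA i)) (y' := g (pB i))
    (by simp [g.injective.ne_iff, pA_ne_pB]) (hg i)
  have : pA (gp g i) ∈ ({g (pA i), g (pB i)} : Set (Fin (2 * n))) := by
    rw [hset]; exact Set.mem_insert _ _
  exact this

lemma gp_memB (hg : PP g) (i : Fin n) :
    pB (gp g i) = g (pA i) ∨ pB (gp g i) = g (pB i) := by
  have hset := pair_set_eq (y := g (pA i)) (y' := g (pB i))
    (by simp [g.injective.ne_iff, pA_ne_pB]) (hg i)
  have : pB (gp g i) ∈ ({g (pA i), g (pB i)} : Set (Fin (2 * n))) := by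
    rw [hset]; exact Set.mem_insert_of_mem _ rfl
  exact this

lemma gp_injective {g : Equiv.Perm (Fin (2 * n))} (hg : PP g) : Function.Injective (gp g) := by
  intro i i' h
  rcases gp_mem hg i with h1 | h1 <;> rcases gp_mem hg i' with h2 | h2 <;>
    rw [h] at h1 <;> rw [h1] at h2 <;> have := g.injective h2
  · exact pA_inj this
  · exact absurd this (pA_ne_pB _ _)
  · exact absurd this (Ne.symm (pA_ne_pB _ _))
  · exact pB_inj this

lemma PP.inv {g : Equiv.Perm (Fin (2 * n))} (hg : PP g) : PP g⁻¹ := by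
  intro j
  set x := g⁻¹ (pA j) with hx
  set y := g⁻¹ (pB j) with hy
  have hgx : g x = pA j := by simp [hx]
  have hgy : g y = pB j := by simp [hy]
  have h1 : gp g (pidx x) = j := by
    unfold gp
    have : pidx (g (pA (pidx x))) = pidx (g x) := by
      apply hg.apply; simp
    rw [this, hgx, pidx_pA]
  have h2 : gp g (pidx y) = j := by
    unfold gp
    have : pidx (g (pA (pidx y))) = pidx (g y) := by
      apply hg.apply; simp
    rw [this, hgy, pidx_pB]
  exact (gp_injective hg (h1.trans h2.symm))

lemma PP.one : PP (1 : Equiv.Perm (Fin (2 * n))) := fun i => by simp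

lemma PP.mul {g h : Equiv.Perm (Fin (2 * n))} (hg : PP g) (hh : PP h) : PP (g * h) := by
  intro i
  simp only [Equiv.Perm.mul_apply]
  exact hg.apply (hh i)

end L0


section L1
variable {n : ℕ}

lemma orbEq_refl (c : Set (Set (Fin (2 * n)))) : OrbEq c c := by
  refine ⟨1, isPairPerm_of_PP PP.one, ?_⟩
  simp

lemma orbEq_symm {c c' : Set (Set (Fin (2 * n)))} (h : OrbEq c c') : OrbEq c' c := by
  obtain ⟨g, hg, himg⟩ := h
  refine ⟨g⁻¹, isPairPerm_of_PP (PP_of_isPairPerm hg).inv, ?_⟩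
  rw [← himg, ← Set.image_comp]
  have h2 : ((fun A => ⇑g⁻¹ '' A) ∘ fun A => ⇑g '' A) = fun A : Set (Fin (2*n)) => A := by
    funext A
    simp only [Function.comp_apply, ← Set.image_comp]
    simp
  rw [h2, Set.image_id']

lemma orbEq_trans {c c' c'' : Set (Set (Fin (2 * n)))} (h : OrbEq c c')
    (h' : OrbEq c' c'') : OrbEq c c'' := by
  obtain ⟨g, hg, himg⟩ := h
  obtain ⟨g', hg', himg'⟩ := h'
  refine ⟨g' * g, isPairPerm_of_PP ((PP_of_isPairPerm hg').mul (PP_of_isPairPerm hg)), ?_⟩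
  rw [← himg', ← himg, ← Set.image_comp]
  congr 1
  funext A
  simp only [Function.comp_apply, ← Set.image_comp]
  rfl

end L1

section L2
variable {n : ℕ}

/-- prefix set of size `k` of the word `σ` -/
def pr (σ : Equiv.Perm (Fin (2 * n))) (k : ℕ) : Set (Fin (2 * n)) :=
  {y | ((σ.symm y : Fin (2 * n)) : ℕ) < k}

lemma mem_pr {σ : Equiv.Perm (Fin (2 * n))} {k : ℕ} {y : Fin (2 * n)} :
    y ∈ pr σ k ↔ ((σ.symm y : Fin (2 * n)) : ℕ) < k := Iff.rfl

lemma image_setOf_lt (σ : Equiv.Perm (Fin (2 * n))) (k : ℕ) :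
    ⇑σ '' {x : Fin (2 * n) | (x : ℕ) < k} = pr σ k := by
  ext y
  constructor
  · rintro ⟨x, hx, rfl⟩; simpa [pr] using hx
  · intro hy; exact ⟨σ.symm y, hy, by simp⟩

lemma card_filter_val_lt (m k : ℕ) (hk : k ≤ m) :
    ((Finset.univ : Finset (Fin m)).filter (fun x : Fin m => (x : ℕ) < k)).card = k := by
  have himg : (((Finset.univ : Finset (Fin m)).filter (fun x : Fin m => (x : ℕ) < k)).image Fin.val)
      = Finset.range k := by
    ext a
    simp only [Finset.mem_image, Finset.mem_filter, Finset.mem_univ, true_and, Finset.mem_range]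
    constructor
    · rintro ⟨x, hx, rfl⟩; exact hx
    · intro ha; exact ⟨⟨a, lt_of_lt_of_le ha hk⟩, ha, rfl⟩
  have := Finset.card_image_of_injective
    ((Finset.univ : Finset (Fin m)).filter (fun x : Fin m => (x : ℕ) < k)) (Fin.val_injective)
  rw [himg, Finset.card_range] at this
  omega

lemma pr_ncard (σ : Equiv.Perm (Fin (2 * n))) {k : ℕ} (hk : k ≤ 2 * n) :
    (pr σ k).ncard = k := by
  rw [← image_setOf_lt]
  rw [Set.ncard_image_of_injective _ σ.injective]
  have : {x : Fin (2 * n) | (x : ℕ) < k}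
      = ↑((Finset.univ : Finset (Fin (2 * n))).filter (fun x : Fin (2 * n) => (x : ℕ) < k)) := by
    ext x; simp
  rw [this, Set.ncard_coe_finset, card_filter_val_lt _ _ hk]

lemma chainOf_eq (σ : Equiv.Perm (Fin (2 * n))) :
    chainOf σ = {A | ∃ k : ℕ, 1 ≤ k ∧ k ≤ 2 * n - 1 ∧ A = pr σ k} := by
  unfold chainOf
  ext A
  simp only [Set.mem_setOf_eq]
  constructor
  · rintro ⟨k, h1, h2, rfl⟩; exact ⟨k, h1, h2, (image_setOf_lt σ k).symm ▸ rfl⟩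
  · rintro ⟨k, h1, h2, rfl⟩; exact ⟨k, h1, h2, (image_setOf_lt σ k).symm⟩

lemma pr_mono (σ : Equiv.Perm (Fin (2 * n))) {k k' : ℕ} (h : k ≤ k') : pr σ k ⊆ pr σ k' :=
  fun y hy => lt_of_lt_of_le hy h

lemma properChain_chainOf (hn : 1 ≤ n) (σ : Equiv.Perm (Fin (2 * n))) :
    ProperChain n (chainOf σ) := by
  rw [chainOf_eq]
  constructor
  · rintro A ⟨k, _, _, rfl⟩ B ⟨k', _, _, rfl⟩ _
    rcases le_total k k' with h | h
    · exact Or.inl (pr_mono σ h)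
    · exact Or.inr (pr_mono σ h)
  · rintro A ⟨k, h1, h2, rfl⟩
    constructor
    · refine ⟨σ ⟨0, by omega⟩, ?_⟩
      simp only [pr, Set.mem_setOf_eq, Equiv.symm_apply_apply]
      omega
    · intro hu
      have : σ ⟨k, by omega⟩ ∈ pr σ k := by rw [hu]; trivial
      simp only [pr, Set.mem_setOf_eq, Equiv.symm_apply_apply] at this
      omega

lemma rankSet_chainOf (σ : Equiv.Perm (Fin (2 * n))) :
    rankSet (chainOf σ) = Set.Icc 1 (2 * n - 1) := by
  rw [chainOf_eq]
  ext m
  simp only [rankSet, Set.mem_image, Set.mem_setOf_eq, Set.mem_Icc]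
  constructor
  · rintro ⟨A, ⟨k, h1, h2, rfl⟩, rfl⟩
    rw [pr_ncard σ (by omega)]; omega
  · rintro ⟨h1, h2⟩
    exact ⟨pr σ m, ⟨m, h1, h2, rfl⟩, pr_ncard σ (by omega)⟩

lemma maxChain_chainOf (hn : 1 ≤ n) (σ : Equiv.Perm (Fin (2 * n))) :
    MaxChain n (chainOf σ) :=
  ⟨properChain_chainOf hn σ, rankSet_chainOf σ⟩

lemma restrict_chainOf (σ : Equiv.Perm (Fin (2 * n))) (T : Set ℕ) :
    restrict (chainOf σ) T = {A | ∃ k : ℕ, 1 ≤ k ∧ k ≤ 2 * n - 1 ∧ k ∈ T ∧ A = pr σ k} := by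
  rw [chainOf_eq]
  ext A
  simp only [restrict, Set.mem_setOf_eq, Set.mem_sep_iff]
  constructor
  · rintro ⟨⟨k, h1, h2, rfl⟩, hT⟩
    rw [pr_ncard σ (by omega)] at hT
    exact ⟨k, h1, h2, hT, rfl⟩
  · rintro ⟨k, h1, h2, hT, rfl⟩
    exact ⟨⟨k, h1, h2, rfl⟩, by rw [pr_ncard σ (by omega)]; exact hT⟩

lemma rankSet_restrict_chainOf (σ : Equiv.Perm (Fin (2 * n))) (T : Set ℕ) :
    rankSet (restrict (chainOf σ) T) = Set.Icc 1 (2 * n - 1) ∩ T := by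
  rw [restrict_chainOf]
  ext m
  simp only [rankSet, Set.mem_image, Set.mem_setOf_eq, Set.mem_inter_iff, Set.mem_Icc]
  constructor
  · rintro ⟨A, ⟨k, h1, h2, hT, rfl⟩, rfl⟩
    rw [pr_ncard σ (by omega)]
    exact ⟨⟨h1, h2⟩, hT⟩
  · rintro ⟨⟨h1, h2⟩, hT⟩
    exact ⟨pr σ m, ⟨m, h1, h2, hT, rfl⟩, pr_ncard σ (by omega)⟩

lemma image_pr (g σ : Equiv.Perm (Fin (2 * n))) (k : ℕ) :
    ⇑g '' pr σ k = pr (g * σ) k := by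
  ext y
  rw [Set.mem_image_equiv]
  simp only [mem_pr]
  have : (g * σ).symm y = σ.symm (g.symm y) := rfl
  rw [this]

lemma image_chainOf (g σ : Equiv.Perm (Fin (2 * n))) :
    (fun A => ⇑g '' A) '' chainOf σ = chainOf (g * σ) := by
  rw [chainOf_eq, chainOf_eq]
  ext B
  simp only [Set.mem_image, Set.mem_setOf_eq]
  constructor
  · rintro ⟨A, ⟨k, h1, h2, rfl⟩, rfl⟩
    exact ⟨k, h1, h2, (image_pr g σ k) ▸ rfl⟩
  · rintro ⟨k, h1, h2, rfl⟩
    exact ⟨pr σ k, ⟨k, h1, h2, rfl⟩, image_pr g σ k⟩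

lemma image_restrict (g : Equiv.Perm (Fin (2 * n))) (c : Set (Set (Fin (2 * n)))) (T : Set ℕ) :
    (fun A => ⇑g '' A) '' restrict c T = restrict ((fun A => ⇑g '' A) '' c) T := by
  ext B
  simp only [restrict, Set.mem_image, Set.mem_sep_iff]
  constructor
  · rintro ⟨A, ⟨hA, hT⟩, rfl⟩
    exact ⟨⟨A, hA, rfl⟩, by rwa [Set.ncard_image_of_injective _ g.injective]⟩
  · rintro ⟨⟨A, hA, rfl⟩, hT⟩
    rw [Set.ncard_image_of_injective _ g.injective] at hT
    exact ⟨A, ⟨hA, hT⟩, rfl⟩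

lemma pr_inj (σ τ : Equiv.Perm (Fin (2 * n)))
    (h : ∀ k : ℕ, 1 ≤ k → k ≤ 2 * n - 1 → pr σ k = pr τ k) : σ = τ := by
  have hsymm : ∀ y, σ.symm y = τ.symm y := by
    intro y
    have ha := (σ.symm y).isLt
    have hb := (τ.symm y).isLt
    apply Fin.ext
    rcases Nat.lt_trichotomy ((σ.symm y : Fin (2*n)) : ℕ) ((τ.symm y : Fin (2*n)) : ℕ) with hlt | heq | hlt
    · exfalso
      have hk := h (((σ.symm y : Fin (2*n)) : ℕ) + 1) (by omega) (by omega)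
      have : y ∈ pr σ (((σ.symm y : Fin (2*n)) : ℕ) + 1) := by simp [mem_pr]
      rw [hk] at this
      rw [mem_pr] at this
      omega
    · exact heq
    · exfalso
      have hk := h (((τ.symm y : Fin (2*n)) : ℕ) + 1) (by omega) (by omega)
      have : y ∈ pr τ (((τ.symm y : Fin (2*n)) : ℕ) + 1) := by simp [mem_pr]
      rw [← hk] at this
      rw [mem_pr] at this
      omega
  have h2 : σ.symm = τ.symm := Equiv.ext hsymm
  have := congrArg Equiv.symm h2
  simpa using this

lemma chainOf_injective (hn : 1 ≤ n) {σ τ : Equiv.Perm (Fin (2 * n))}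
    (h : chainOf σ = chainOf τ) : σ = τ := by
  apply pr_inj
  intro k h1 h2
  have hmem : pr σ k ∈ chainOf τ := by
    rw [← h, chainOf_eq]; exact ⟨k, h1, h2, rfl⟩
  rw [chainOf_eq] at hmem
  obtain ⟨k', h1', h2', heq⟩ := hmem
  have : k = k' := by
    have := congrArg Set.ncard heq
    rwa [pr_ncard σ (by omega), pr_ncard τ (by omega)] at this
  rw [heq, this]

end L2

section L5
variable {n : ℕ}

/-- monotonicity of the positions of the `pA i` for a canonical word -/
lemma canon_mono {σ : Equiv.Perm (Fin (2 * n))} (hσ : IsCanonical σ) :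
    StrictMono (fun i : Fin n => σ.symm (pA i)) := by
  have key : ∀ d : ℕ, ∀ i j : Fin n, (j : ℕ) = (i : ℕ) + d + 1 →
      σ.symm (pA i) < σ.symm (pA j) := by
    intro d
    induction d with
    | zero => intro i j hj; exact hσ.2 i j (by omega)
    | succ d ih =>
      intro i j hj
      have hm : (i : ℕ) + d + 1 < n := by have := j.isLt; omega
      set m : Fin n := ⟨(i : ℕ) + d + 1, hm⟩ with hmdef
      exact lt_trans (ih i m (by simp [hmdef])) (hσ.2 m j (by simp [hmdef]; omega))
  intro i j hij
  exact key ((j : ℕ) - (i : ℕ) - 1) i j (by omega)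

lemma canon_mono_iff {σ : Equiv.Perm (Fin (2 * n))} (hσ : IsCanonical σ) {i j : Fin n} :
    σ.symm (pA i) < σ.symm (pA j) ↔ i < j := (canon_mono hσ).lt_iff_lt

/-- the number of opened pairs before the position of an opener equals its index -/
lemma openval {σ : Equiv.Perm (Fin (2 * n))} (hσ : IsCanonical σ) {k : Fin n} {q : Fin (2 * n)}
    (hq : σ.symm (pA k) = q) :
    (Finset.univ.filter (fun m : Fin n => ((σ.symm (pA m) : Fin (2 * n)) : ℕ) < (q : ℕ))).card
      = (k : ℕ) := by
  have hset : (Finset.univ.filter (fun m : Fin n => ((σ.symm (pA m) : Fin (2 * n)) : ℕ) < (q : ℕ)))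
      = Finset.univ.filter (fun m : Fin n => (m : ℕ) < (k : ℕ)) := by
    ext m
    simp only [Finset.mem_filter, Finset.mem_univ, true_and]
    constructor
    · intro h
      have : σ.symm (pA m) < σ.symm (pA k) := by rw [hq]; exact Fin.lt_def.mpr h
      exact (canon_mono_iff hσ).mp this
    · intro h
      have : σ.symm (pA m) < σ.symm (pA k) := (canon_mono_iff hσ).mpr (Fin.lt_def.mpr h)
      rw [hq] at this; exact this
  rw [hset]
  -- card of {m : Fin n | m < k} = k
  have himg : ((Finset.univ.filter (fun m : Fin n => (m : ℕ) < (k : ℕ))).image Fin.val)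
      = Finset.range (k : ℕ) := by
    ext a
    simp only [Finset.mem_image, Finset.mem_filter, Finset.mem_univ, true_and, Finset.mem_range]
    constructor
    · rintro ⟨x, hx, rfl⟩; exact hx
    · intro ha; exact ⟨⟨a, lt_trans ha k.isLt⟩, ha, rfl⟩
  have := Finset.card_image_of_injective
    (Finset.univ.filter (fun m : Fin n => (m : ℕ) < (k : ℕ))) (Fin.val_injective)
  rw [himg, Finset.card_range] at this
  omega

/-- uniqueness of the canonical representative in each orbit -/
lemma canon_unique {σ τ : Equiv.Perm (Fin (2 * n))} {g : Equiv.Perm (Fin (2 * n))}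
    (hσ : IsCanonical σ) (hτ : IsCanonical τ) (hg : PP g) (heq : τ = g * σ) : τ = σ := by
  have happ : ∀ x, τ x = g (σ x) := by intro x; rw [heq]; rfl
  have hpos : ∀ x : Fin (2 * n), τ.symm (g x) = σ.symm x := by
    intro x
    have : τ (σ.symm x) = g x := by rw [happ]; simp
    rw [← this]; simp
  have main : ∀ q : Fin (2 * n), (∀ j : Fin (2 * n), (j : ℕ) < (q : ℕ) → σ j = τ j) → σ q = τ q := by
    intro q ih
    have gfix : ∀ j : Fin (2 * n), (j : ℕ) < (q : ℕ) → g (σ j) = σ j := by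
      intro j hj
      rw [← happ, ← ih j hj]
    have hvq : σ.symm (σ q) = q := by simp
    have hwq : τ.symm (τ q) = q := by simp
    have hwv : τ q = g (σ q) := happ q
    rcases pa_or_pb (σ q) with hvp | hvp
    · -- σ q = pA k : opener in σ
      set k := pidx (σ q) with hk
      rw [hvp] at hvq
      have hBv : (q : ℕ) < ((σ.symm (pB k) : Fin (2 * n)) : ℕ) := by
        have := hσ.1 k
        rw [hvq] at this
        exact this
      have hgB : τ.symm (g (pB k)) = σ.symm (pB k) := hpos _
      have hgA' : pidx (g (pA k)) = pidx (τ q) := by rw [hwv, hvp]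
      have hgB' : pidx (g (pB k)) = pidx (τ q) := by
        rw [← hgA']; exact (hg.apply (by rw [pidx_pA, pidx_pB])).symm
      have hwA : τ q = pA (pidx (τ q)) := by
        rcases pa_or_pb (τ q) with h | h
        · exact h
        · exfalso
          have h1 := hτ.1 (pidx (τ q))
          rw [← h, hwq] at h1
          have hAw : pA (pidx (τ q)) = g (pA k) ∨ pA (pidx (τ q)) = g (pB k) := by
            rcases pa_or_pb (g (pA k)) with h2 | h2
            · left; rw [h2, hgA']
            · right
              rcases pa_or_pb (g (pB k)) with h3 | h3
              · rw [h3, hgB']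
              · exfalso
                have h4 : g (pA k) = g (pB k) := by
                  rw [h2, h3, hgA', hgB']
                exact pA_ne_pB k k (g.injective h4)
          rcases hAw with h2 | h2
          · rw [h2] at h1
            have h5 : τ.symm (g (pA k)) = σ.symm (pA k) := hpos _
            rw [h5, hvq] at h1
            exact lt_irrefl _ h1
          · rw [h2, hgB] at h1
            have := Fin.lt_def.mp h1
            omega
      have hcnt : (Finset.univ.filter (fun m : Fin n =>
            ((σ.symm (pA m) : Fin (2 * n)) : ℕ) < (q : ℕ))) =
          (Finset.univ.filter (fun m : Fin n =>
            ((τ.symm (pA m) : Fin (2 * n)) : ℕ) < (q : ℕ))) := by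
        ext m
        simp only [Finset.mem_filter, Finset.mem_univ, true_and]
        constructor
        · intro hm
          have h3 : τ (σ.symm (pA m)) = σ (σ.symm (pA m)) := (ih _ hm).symm
          have h2 : σ (σ.symm (pA m)) = pA m := by simp
          have h4 : τ.symm (pA m) = σ.symm (pA m) := by
            rw [Equiv.symm_apply_eq]
            exact (h3.trans h2).symm
          rw [h4]; exact hm
        · intro hm
          have h3 : σ (τ.symm (pA m)) = τ (τ.symm (pA m)) := ih _ hm
          have h2 : τ (τ.symm (pA m)) = pA m := by simp
          have h4 : σ.symm (pA m) = τ.symm (pA m) := by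
            rw [Equiv.symm_apply_eq]
            exact (h3.trans h2).symm
          rw [h4]; exact hm
      have hwk : τ.symm (pA (pidx (τ q))) = q := by rw [← hwA]; exact hwq
      have c1 := openval hσ hvq
      have c2 := openval hτ hwk
      rw [hcnt] at c1
      have hkw : k = pidx (τ q) := Fin.ext (c1.symm.trans c2)
      rw [hvp, hwA, hkw]
    · -- σ q = pB k : closer in σ
      set k := pidx (σ q) with hk
      rw [hvp] at hvq
      have hA : ((σ.symm (pA k) : Fin (2 * n)) : ℕ) < (q : ℕ) := by
        have := hσ.1 k
        rw [hvq] at this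
        exact Fin.lt_def.mp this
      have hgA : g (pA k) = pA k := by
        have h2 : σ (σ.symm (pA k)) = pA k := by simp
        have := gfix (σ.symm (pA k)) hA
        rwa [h2] at this
      have hgv : pidx (g (σ q)) = k := by
        have h2 : pidx (g (σ q)) = pidx (g (pA k)) := hg.apply (by rw [pidx_pA])
        rw [h2, hgA, pidx_pA]
      have hgvp : g (σ q) = pA k ∨ g (σ q) = pB k := by
        rcases pa_or_pb (g (σ q)) with h2 | h2
        · left; rwa [hgv] at h2
        · right; rwa [hgv] at h2
      rcases hgvp with h2 | h2
      · exfalso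
        have hq1 : τ.symm (g (σ q)) = σ.symm (σ q) := hpos _
        rw [h2] at hq1
        simp only [Equiv.symm_apply_apply] at hq1
        have hlt : τ.symm (pA k) = σ.symm (pA k) := by
          have h3 := ih (σ.symm (pA k)) hA
          have h4 : σ (σ.symm (pA k)) = pA k := by simp
          rw [h4] at h3
          rw [Equiv.symm_apply_eq]
          exact h3
        rw [hq1] at hlt
        have := congrArg Fin.val hlt
        omega
      · rw [hvp, ← h2, ← happ]
  have hall : ∀ N : ℕ, ∀ q : Fin (2 * n), (q : ℕ) = N → σ q = τ q := by
    intro N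
    induction N using Nat.strong_induction_on with
    | _ N ihN =>
      intro q hq
      apply main q
      intro j hj
      exact ihN (j : ℕ) (by omega) j rfl
  exact Equiv.ext (fun x => (hall (x : ℕ) x rfl).symm)

end L5

section L6
variable {n : ℕ}

lemma permLexLt_irrefl (σ : Equiv.Perm (Fin (2 * n))) : ¬ PermLexLt σ σ := by
  rintro ⟨k, _, hk⟩; exact lt_irrefl _ hk

lemma permLexLt_asymm {σ τ : Equiv.Perm (Fin (2 * n))} (h1 : PermLexLt σ τ)
    (h2 : PermLexLt τ σ) : False := by
  obtain ⟨k1, ha1, hl1⟩ := h1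
  obtain ⟨k2, ha2, hl2⟩ := h2
  rcases lt_trichotomy k1 k2 with h | h | h
  · rw [ha2 k1 h] at hl1; exact lt_irrefl _ hl1
  · subst h; exact lt_irrefl _ (hl1.trans hl2)
  · rw [ha1 k2 h] at hl2; exact lt_irrefl _ hl2

end L6

section L8
variable {n : ℕ}

lemma mul_swap_symm_apply (σ : Equiv.Perm (Fin (2 * n))) (a b x : Fin (2 * n)) :
    (σ * Equiv.swap a b).symm x = Equiv.swap a b (σ.symm x) := by
  have h : (σ * Equiv.swap a b).symm x = (Equiv.swap a b).symm (σ.symm x) := rfl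
  rw [h, Equiv.symm_swap]

lemma swap_val {a b r : Fin (2 * n)} :
    ((Equiv.swap a b r : Fin (2 * n)) : ℕ)
      = if r = a then (b : ℕ) else if r = b then (a : ℕ) else (r : ℕ) := by
  rcases eq_or_ne r a with h | h
  · subst h; simp [Equiv.swap_apply_left]
  · rcases eq_or_ne r b with h2 | h2
    · subst h2; simp [Equiv.swap_apply_right, h]
    · rw [Equiv.swap_apply_of_ne_of_ne h h2]; simp [h, h2]

/-- The type (A) lowering move : exchanging positions q, q+1 when the letter at q+1
closes a pair opened before q and is smaller than the letter at q. -/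
lemma lowA {σ : Equiv.Perm (Fin (2 * n))} (hσ : IsCanonical σ) {q : Fin (2 * n)}
    (hq1 : (q : ℕ) + 1 < 2 * n) {k : Fin n}
    (hw : σ ⟨(q : ℕ) + 1, hq1⟩ = pB k)
    (hpa : ((σ.symm (pA k) : Fin (2 * n)) : ℕ) < (q : ℕ))
    (hlt : σ ⟨(q : ℕ) + 1, hq1⟩ < σ q) :
    IsCanonical (σ * Equiv.swap q ⟨(q : ℕ) + 1, hq1⟩) ∧
      PermLexLt (σ * Equiv.swap q ⟨(q : ℕ) + 1, hq1⟩) σ := by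
  set q1 : Fin (2 * n) := ⟨(q : ℕ) + 1, hq1⟩ with hq1def
  have hq1v : (q1 : ℕ) = (q : ℕ) + 1 := rfl
  have hqne : q ≠ q1 := by
    intro h; have := congrArg Fin.val h; rw [hq1v] at this; omega
  -- positions in σ
  have hposv : σ.symm (σ q) = q := by simp
  have hposw : σ.symm (σ q1) = q1 := by simp
  have hsymm : ∀ x, (σ * Equiv.swap q q1).symm x = Equiv.swap q q1 (σ.symm x) :=
    fun x => mul_swap_symm_apply σ q q1 x
  -- position of any value x ≠ σ q, σ q1 is unchanged
  have hother : ∀ x, x ≠ σ q → x ≠ σ q1 → (σ * Equiv.swap q q1).symm x = σ.symm x := by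
    intro x hx1 hx2
    rw [hsymm]
    apply Equiv.swap_apply_of_ne_of_ne
    · intro h
      apply hx1
      have h2 : σ (σ.symm x) = σ q := congrArg σ h
      simpa using h2
    · intro h
      apply hx2
      have h2 : σ (σ.symm x) = σ q1 := congrArg σ h
      simpa using h2
  have hvpos : (σ * Equiv.swap q q1).symm (σ q) = q1 := by
    rw [hsymm, hposv, Equiv.swap_apply_left]
  have hwpos : (σ * Equiv.swap q q1).symm (σ q1) = q := by
    rw [hsymm, hposw, Equiv.swap_apply_right]
  -- k is not the pair of σ q
  have hkm : pA k ≠ σ q := by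
    intro h
    have : σ.symm (pA k) = q := by rw [h]; simp
    rw [this] at hpa; omega
  have hAkpos : ((σ.symm (pA k) : Fin (2 * n)) : ℕ) < (q : ℕ) := hpa
  have hAkne1 : σ.symm (pA k) ≠ q := by
    intro h; rw [h] at hpa; omega
  have hAkne2 : σ.symm (pA k) ≠ q1 := by
    intro h; rw [h] at hpa; rw [hq1v] at hpa; omega
  have hAkB : pA k ≠ σ q1 := by
    rw [hw]; exact pA_ne_pB k k
  have hAkunch : (σ * Equiv.swap q q1).symm (pA k) = σ.symm (pA k) :=
    hother _ hkm hAkB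
  constructor
  · constructor
    · -- condition C1
      intro i
      rcases eq_or_ne i k with rfl | hik
      · -- pair k : pB k now at position q, pA k earlier
        rw [hAkunch, ← hw, hwpos]
        exact Fin.lt_def.mpr hpa
      · have hBiw : pB i ≠ σ q1 := by
          rw [hw]; intro h; exact hik (pB_inj h)
        have hAiw : pA i ≠ σ q1 := by rw [hw]; exact pA_ne_pB i k
        by_cases hAiv : pA i = σ q
        · -- σ q = pA i ; its new position is q1
          have h1 : (σ * Equiv.swap q q1).symm (pA i) = q1 := by rw [hAiv, hvpos]
          have hBv : pB i ≠ σ q := by rw [← hAiv]; exact (pA_ne_pB i i).symm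
          have h2 : (σ * Equiv.swap q q1).symm (pB i) = σ.symm (pB i) := hother _ hBv hBiw
          rw [h1, h2]
          have h3 : q < σ.symm (pB i) := by
            have h5 := hσ.1 i
            rw [hAiv, hposv] at h5
            exact h5
          have h6 : σ.symm (pB i) ≠ q1 := by
            intro h
            apply hBiw
            rw [← h]; simp
          have h7 := Fin.lt_def.mp h3
          have h8 := Fin.val_ne_of_ne h6
          rw [hq1v] at h8
          exact Fin.lt_def.mpr (by rw [hq1v]; omega)
        · by_cases hBiv : pB i = σ q
          · have h1 : (σ * Equiv.swap q q1).symm (pB i) = q1 := by rw [hBiv, hvpos]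
            have h2 : (σ * Equiv.swap q q1).symm (pA i) = σ.symm (pA i) := hother _ hAiv hAiw
            rw [h1, h2]
            have h3 : σ.symm (pA i) < q := by
              have := hσ.1 i
              rw [hBiv, hposv] at this
              exact this
            have := Fin.lt_def.mp h3
            exact Fin.lt_def.mpr (by rw [hq1v]; omega)
          · rw [hother _ hAiv hAiw, hother _ hBiv hBiw]
            exact hσ.1 i
    · -- condition C2
      intro i j hij
      have hAiw : pA i ≠ σ q1 := by rw [hw]; exact pA_ne_pB i k
      have hAjw : pA j ≠ σ q1 := by rw [hw]; exact pA_ne_pB j k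
      by_cases hAiv : pA i = σ q
      · have h1 : (σ * Equiv.swap q q1).symm (pA i) = q1 := by rw [hAiv, hvpos]
        have hAjv : pA j ≠ σ q := by
          rw [← hAiv]; intro h; have := pA_inj h; omega
        rw [h1, hother _ hAjv hAjw]
        have h3 : q < σ.symm (pA j) := by
          have := hσ.2 i j hij
          rw [hAiv, hposv] at this
          exact this
        have h4 : σ.symm (pA j) ≠ q1 := by
          intro h
          apply hAjw
          rw [← h]; simp
        have := Fin.lt_def.mp h3
        have h5 := Fin.val_ne_of_ne h4
        rw [hq1v] at h5
        exact Fin.lt_def.mpr (by rw [hq1v]; omega)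
      · by_cases hAjv : pA j = σ q
        · have h1 : (σ * Equiv.swap q q1).symm (pA j) = q1 := by rw [hAjv, hvpos]
          rw [h1, hother _ hAiv hAiw]
          have h3 : σ.symm (pA i) < q := by
            have := hσ.2 i j hij
            rw [hAjv, hposv] at this
            exact this
          have := Fin.lt_def.mp h3
          exact Fin.lt_def.mpr (by rw [hq1v]; omega)
        · rw [hother _ hAiv hAiw, hother _ hAjv hAjw]
          exact hσ.2 i j hij
  · -- lex smaller
    refine ⟨q, ?_, ?_⟩
    · intro j hj
      have hj1 : j ≠ q := ne_of_lt hj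
      have hj2 : j ≠ q1 := by
        intro h; rw [h] at hj; have := Fin.lt_def.mp hj; rw [hq1v] at this; omega
      show σ (Equiv.swap q q1 j) = σ j
      rw [Equiv.swap_apply_of_ne_of_ne hj1 hj2]
    · show σ (Equiv.swap q q1 q) < σ q
      rw [Equiv.swap_apply_left]
      exact hlt

/-- The type (B) lowering move: both letters at q, q+1 are openers whose partners
occur in the wrong order; swap them and relabel the two pairs. -/
lemma lowB {σ : Equiv.Perm (Fin (2 * n))} (hσ : IsCanonical σ) {q : Fin (2 * n)}
    (hq1 : (q : ℕ) + 1 < 2 * n) {k k' : Fin n}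
    (hv : σ q = pA k) (hw : σ ⟨(q : ℕ) + 1, hq1⟩ = pA k')
    (hBlt : ((σ.symm (pB k') : Fin (2 * n)) : ℕ) < ((σ.symm (pB k) : Fin (2 * n)) : ℕ)) :
    ∃ h : Equiv.Perm (Fin (2 * n)), PP h ∧
      IsCanonical (h * (σ * Equiv.swap q ⟨(q : ℕ) + 1, hq1⟩)) ∧
      PermLexLt (h * (σ * Equiv.swap q ⟨(q : ℕ) + 1, hq1⟩)) σ := by
  set q1 : Fin (2 * n) := ⟨(q : ℕ) + 1, hq1⟩ with hq1def
  have hq1v : (q1 : ℕ) = (q : ℕ) + 1 := rfl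
  have hposv : σ.symm (pA k) = q := by rw [← hv]; simp
  have hposw : σ.symm (pA k') = q1 := by rw [← hw]; simp
  have hkk' : k < k' := by
    rw [← canon_mono_iff hσ, hposv, hposw]
    exact Fin.lt_def.mpr (by omega)
  have hkne : k ≠ k' := ne_of_lt hkk'
  set r4 := σ.symm (pB k') with hr4
  set r2 := σ.symm (pB k) with hr2
  have hr4q : (q1 : ℕ) < (r4 : ℕ) := by
    have := hσ.1 k'
    rw [hposw] at this
    exact Fin.lt_def.mp this
  have hr2r4 : (r4 : ℕ) < (r2 : ℕ) := hBlt
  -- the relabelling permutation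
  set h : Equiv.Perm (Fin (2 * n)) :=
    (Equiv.swap (pA k) (pA k')) * (Equiv.swap (pB k) (pB k')) with hh
  have hAkBk : pA k ≠ pB k := pA_ne_pB k k
  have hAkBk' : pA k ≠ pB k' := pA_ne_pB k k'
  have hAk'Bk : pA k' ≠ pB k := pA_ne_pB k' k
  have hAk'Bk' : pA k' ≠ pB k' := pA_ne_pB k' k'
  have hAkAk' : pA k ≠ pA k' := fun hc => hkne (pA_inj hc)
  have hBkBk' : pB k ≠ pB k' := fun hc => hkne (pB_inj hc)
  have happ1 : h (pA k) = pA k' := by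
    rw [hh]
    show Equiv.swap (pA k) (pA k') (Equiv.swap (pB k) (pB k') (pA k)) = pA k'
    rw [Equiv.swap_apply_of_ne_of_ne hAkBk hAkBk', Equiv.swap_apply_left]
  have happ2 : h (pA k') = pA k := by
    rw [hh]
    show Equiv.swap (pA k) (pA k') (Equiv.swap (pB k) (pB k') (pA k')) = pA k
    rw [Equiv.swap_apply_of_ne_of_ne hAk'Bk hAk'Bk', Equiv.swap_apply_right]
  have happ3 : h (pB k) = pB k' := by
    rw [hh]
    show Equiv.swap (pA k) (pA k') (Equiv.swap (pB k) (pB k') (pB k)) = pB k'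
    rw [Equiv.swap_apply_left, Equiv.swap_apply_of_ne_of_ne (Ne.symm hAkBk') (Ne.symm hAk'Bk')]
  have happ4 : h (pB k') = pB k := by
    rw [hh]
    show Equiv.swap (pA k) (pA k') (Equiv.swap (pB k) (pB k') (pB k')) = pB k
    rw [Equiv.swap_apply_right, Equiv.swap_apply_of_ne_of_ne (Ne.symm hAkBk) (Ne.symm hAk'Bk)]
  have happ5 : ∀ y, y ≠ pA k → y ≠ pA k' → y ≠ pB k → y ≠ pB k' → h y = y := by
    intro y h1 h2 h3 h4
    rw [hh]
    show Equiv.swap (pA k) (pA k') (Equiv.swap (pB k) (pB k') y) = y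
    rw [Equiv.swap_apply_of_ne_of_ne h3 h4, Equiv.swap_apply_of_ne_of_ne h1 h2]
  have hPP : PP h := by
    intro i
    rcases eq_or_ne i k with rfl | h1
    · rw [happ1, happ3, pidx_pA, pidx_pB]
    · rcases eq_or_ne i k' with rfl | h2
      · rw [happ2, happ4, pidx_pA, pidx_pB]
      · rw [happ5 (pA i) (fun hc => h1 (pA_inj hc)) (fun hc => h2 (pA_inj hc))
            (pA_ne_pB i k) (pA_ne_pB i k'),
          happ5 (pB i) (Ne.symm (pA_ne_pB k i)) (Ne.symm (pA_ne_pB k' i))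
            (fun hc => h1 (pB_inj hc)) (fun hc => h2 (pB_inj hc)), pidx_pA, pidx_pB]
  refine ⟨h, hPP, ?_, ?_⟩
  · -- canonicity of ρ = h * (σ * swap q q1)
    have hsymm : ∀ x, (h * (σ * Equiv.swap q q1)).symm x
        = Equiv.swap q q1 (σ.symm (h.symm x)) := by
      intro x
      have e1 : (h * (σ * Equiv.swap q q1)).symm x = (σ * Equiv.swap q q1).symm (h.symm x) := rfl
      rw [e1, mul_swap_symm_apply]
    have hsAk : (h * (σ * Equiv.swap q q1)).symm (pA k) = q := by
      rw [hsymm]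
      have : h.symm (pA k) = pA k' := by
        rw [Equiv.symm_apply_eq, happ2]
      rw [this, hposw, Equiv.swap_apply_right]
    have hsAk' : (h * (σ * Equiv.swap q q1)).symm (pA k') = q1 := by
      rw [hsymm]
      have : h.symm (pA k') = pA k := by
        rw [Equiv.symm_apply_eq, happ1]
      rw [this, hposv, Equiv.swap_apply_left]
    have hr4ne : r4 ≠ q ∧ r4 ≠ q1 := by
      constructor <;> intro hc <;> rw [hc] at hr4q <;> omega
    have hr2ne : r2 ≠ q ∧ r2 ≠ q1 := by
      constructor <;> intro hc <;> rw [hc] at hr2r4 <;> omega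
    have hsBk : (h * (σ * Equiv.swap q q1)).symm (pB k) = r4 := by
      rw [hsymm]
      have : h.symm (pB k) = pB k' := by
        rw [Equiv.symm_apply_eq, happ4]
      rw [this, ← hr4, Equiv.swap_apply_of_ne_of_ne hr4ne.1 hr4ne.2]
    have hsBk' : (h * (σ * Equiv.swap q q1)).symm (pB k') = r2 := by
      rw [hsymm]
      have : h.symm (pB k') = pB k := by
        rw [Equiv.symm_apply_eq, happ3]
      rw [this, ← hr2, Equiv.swap_apply_of_ne_of_ne hr2ne.1 hr2ne.2]
    have hsother : ∀ y, y ≠ pA k → y ≠ pA k' → y ≠ pB k → y ≠ pB k' →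
        (h * (σ * Equiv.swap q q1)).symm y = σ.symm y := by
      intro y h1 h2 h3 h4
      rw [hsymm]
      have : h.symm y = y := by
        rw [Equiv.symm_apply_eq, happ5 y h1 h2 h3 h4]
      rw [this]
      apply Equiv.swap_apply_of_ne_of_ne
      · intro hc
        exact h1 (by rw [← hv, ← hc]; simp)
      · intro hc
        exact h2 (by rw [← hw, ← hc]; simp)
    have hsA : ∀ i, (h * (σ * Equiv.swap q q1)).symm (pA i) = σ.symm (pA i) := by
      intro i
      rcases eq_or_ne i k with rfl | h1
      · rw [hsAk, hposv]
      · rcases eq_or_ne i k' with rfl | h2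
        · rw [hsAk', hposw]
        · exact hsother (pA i) (fun hc => h1 (pA_inj hc)) (fun hc => h2 (pA_inj hc))
            (pA_ne_pB i k) (pA_ne_pB i k')
    constructor
    · intro i
      rcases eq_or_ne i k with rfl | h1
      · rw [hsA, hsBk, hposv]
        exact Fin.lt_def.mpr (by omega)
      · rcases eq_or_ne i k' with rfl | h2
        · rw [hsA, hsBk', hposw]
          exact Fin.lt_def.mpr (by omega)
        · rw [hsA, hsother (pB i) (Ne.symm (pA_ne_pB k i)) (Ne.symm (pA_ne_pB k' i))
            (fun hc => h1 (pB_inj hc)) (fun hc => h2 (pB_inj hc))]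
          exact hσ.1 i
    · intro i j hij
      rw [hsA, hsA]
      exact hσ.2 i j hij
  · -- lex smaller, witness r4
    refine ⟨r4, ?_, ?_⟩
    · intro j hj
      have hjval := Fin.lt_def.mp hj
      show h (σ (Equiv.swap q q1 j)) = σ j
      rcases eq_or_ne j q with rfl | hjq
      · rw [Equiv.swap_apply_left, hw, happ2, ← hv]
      · rcases eq_or_ne j q1 with rfl | hjq1
        · rw [Equiv.swap_apply_right, hv, happ1, ← hw]
        · rw [Equiv.swap_apply_of_ne_of_ne hjq hjq1]
          apply happ5
          · intro hc
            apply hjq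
            rw [← hposv, ← hc]; simp
          · intro hc
            apply hjq1
            rw [← hposw, ← hc]; simp
          · intro hc
            have : r2 = j := by rw [hr2, ← hc]; simp
            omega
          · intro hc
            have : r4 = j := by rw [hr4, ← hc]; simp
            omega
    · show h (σ (Equiv.swap q q1 r4)) < σ r4
      have hr4ne : r4 ≠ q ∧ r4 ≠ q1 := by
        constructor <;> intro hc <;> rw [hc] at hr4q <;> omega
      rw [Equiv.swap_apply_of_ne_of_ne hr4ne.1 hr4ne.2]
      have : σ r4 = pB k' := by rw [hr4]; simp
      rw [this, happ4]
      exact Fin.lt_def.mpr (by simp; omega)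


end L8

section L9a
variable {n : ℕ}

/-- abbreviation for the loc-min hypothesis of type (A) -/
def LMA {n : ℕ} (σ : Equiv.Perm (Fin (2 * n))) (S : Set ℕ) : Prop :=
  ∀ (q : Fin (2 * n)) (hq1 : (q : ℕ) + 1 < 2 * n), ((q : ℕ) + 1) ∉ S →
    ∀ k : Fin n, σ ⟨(q : ℕ) + 1, hq1⟩ = pB k →
      ((σ.symm (pA k) : Fin (2 * n)) : ℕ) < (q : ℕ) → σ q < σ ⟨(q : ℕ) + 1, hq1⟩

/-- abbreviation for the loc-min hypothesis of type (B) -/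
def LMB {n : ℕ} (σ : Equiv.Perm (Fin (2 * n))) (S : Set ℕ) : Prop :=
  ∀ (q : Fin (2 * n)) (hq1 : (q : ℕ) + 1 < 2 * n), ((q : ℕ) + 1) ∉ S →
    ∀ k k' : Fin n, σ q = pA k → σ ⟨(q : ℕ) + 1, hq1⟩ = pA k' →
      ((σ.symm (pB k) : Fin (2 * n)) : ℕ) < ((σ.symm (pB k') : Fin (2 * n)) : ℕ)

/-- In a zone, after an opener every letter is an opener or closes the pair
opened immediately before it. -/
lemma tail_lemma {σ : Equiv.Perm (Fin (2 * n))} (hσ : IsCanonical σ) {S : Set ℕ}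
    (hLA : LMA σ S) {z1 z2 : ℕ} (gap : ∀ s ∈ S, s ≤ z1 ∨ z2 ≤ s)
    {r0 : Fin (2 * n)} {k0 : Fin n} (hr0a : z1 ≤ (r0 : ℕ))
    (hbase : σ r0 = pA k0) :
    ∀ r : Fin (2 * n), (r0 : ℕ) < (r : ℕ) → (r : ℕ) < z2 →
      (∃ k, σ r = pA k) ∨ (∃ k, σ r = pB k ∧ ((σ.symm (pA k) : Fin (2 * n)) : ℕ) + 1 = (r : ℕ)) := by
  have main : ∀ N : ℕ, ∀ r : Fin (2 * n), (r : ℕ) = N → (r0 : ℕ) < (r : ℕ) → (r : ℕ) < z2 →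
      (∃ k, σ r = pA k) ∨ (∃ k, σ r = pB k ∧ ((σ.symm (pA k) : Fin (2 * n)) : ℕ) + 1 = (r : ℕ)) := by
    intro N
    induction N using Nat.strong_induction_on with
    | _ N ihN =>
      intro r hrN hr1 hr2
      rcases pa_or_pb (σ r) with hop | hcl
      · exact Or.inl ⟨pidx (σ r), hop⟩
      · set k := pidx (σ r) with hk
        have hposr : σ.symm (σ r) = r := by simp
        rw [hcl] at hposr
        have hAk : ((σ.symm (pA k) : Fin (2 * n)) : ℕ) < (r : ℕ) := by
          have := hσ.1 k
          rw [hposr] at this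
          exact Fin.lt_def.mp this
        rcases eq_or_lt_of_le (Nat.succ_le_of_lt hAk) with heq | hlt
        · exact Or.inr ⟨k, hcl, heq⟩
        · -- position of pA k is < r - 1 : use LA at q = r - 1 to get a contradiction
          exfalso
          have hrpos : 0 < (r : ℕ) := by omega
          set rp : Fin (2 * n) := ⟨(r : ℕ) - 1, by have := r.isLt; omega⟩ with hrp
          have hrpv : (rp : ℕ) = (r : ℕ) - 1 := rfl
          have hq1 : (rp : ℕ) + 1 < 2 * n := by have := r.isLt; omega
          have hreq : (⟨(rp : ℕ) + 1, hq1⟩ : Fin (2 * n)) = r := by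
            apply Fin.ext; simp [hrpv]; omega
          have hnotS : ((rp : ℕ) + 1) ∉ S := by
            intro hs
            rcases gap _ hs with h | h <;> omega
          have hlem := hLA rp hq1 hnotS k (by rw [hreq]; exact hcl)
            (by rw [hrpv]; omega)
          rw [hreq] at hlem
          -- hlem : σ rp < σ r ; now find what σ rp is
          have hrpr : (rp : ℕ) < z2 := by omega
          rcases eq_or_lt_of_le (show (r0 : ℕ) ≤ (rp : ℕ) by omega) with heq0 | hlt0
          · -- rp = r0 : σ rp = pA k0 with k < k0, contradiction
            have hrpr0 : rp = r0 := Fin.ext heq0.symm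
            have hσrp : σ rp = pA k0 := by rw [hrpr0]; exact hbase
            have hkk0 : k < k0 := by
              rw [← canon_mono_iff hσ (i := k) (j := k0)]
              have h1 : σ.symm (pA k0) = rp := by rw [← hσrp]; simp
              rw [h1]
              exact Fin.lt_def.mpr (by rw [hrpv]; omega)
            rw [hσrp, hcl] at hlem
            have := Fin.lt_def.mp hlem
            simp only [pA_val, pB_val] at this
            omega
          · rcases ihN (rp : ℕ) (by omega) rp rfl hlt0 hrpr with ⟨k1, hk1⟩ | ⟨k1, hk1, hk1p⟩
            · -- σ rp is an opener pA k1 with k < k1 : value too large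
              have hkk1 : k < k1 := by
                rw [← canon_mono_iff hσ (i := k) (j := k1)]
                have h1 : σ.symm (pA k1) = rp := by rw [← hk1]; simp
                rw [h1]
                exact Fin.lt_def.mpr (by rw [hrpv]; omega)
              rw [hk1, hcl] at hlem
              have := Fin.lt_def.mp hlem
              simp only [pA_val, pB_val] at this
              omega
            · -- σ rp = pB k1 with pA k1 just before : k < k1 again
              have hkne : k ≠ k1 := by
                intro hc
                rw [← hc] at hk1
                rw [← hcl] at hk1
                have := σ.injective hk1
                rw [← this] at hrpv
                omega
              have hkk1 : k < k1 := by
                rw [← canon_mono_iff hσ (i := k) (j := k1)]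
                apply Fin.lt_def.mpr
                have h2 : ((σ.symm (pA k1) : Fin (2 * n)) : ℕ) = (r : ℕ) - 2 := by omega
                have h3 : ((σ.symm (pA k) : Fin (2 * n)) : ℕ) ≠ (r : ℕ) - 2 := by
                  intro hc
                  rw [← h2] at hc
                  have := σ.symm.injective (Fin.ext hc : σ.symm (pA k) = σ.symm (pA k1))
                  exact hkne (pA_inj this)
                omega
              rw [hk1, hcl] at hlem
              have := Fin.lt_def.mp hlem
              simp only [pB_val] at this
              omega
  intro r h1 h2
  exact main (r : ℕ) r rfl h1 h2

/-- After a plain opener (whose partner lies beyond the zone), all further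
letters of the zone are openers. -/
lemma allO_lemma {σ : Equiv.Perm (Fin (2 * n))} (hσ : IsCanonical σ) {S : Set ℕ}
    (hLA : LMA σ S) (hLB : LMB σ S) {z1 z2 : ℕ} (gap : ∀ s ∈ S, s ≤ z1 ∨ z2 ≤ s)
    {j : Fin n} (hj1 : z1 ≤ ((σ.symm (pA j) : Fin (2 * n)) : ℕ))
    (hplain : z2 ≤ ((σ.symm (pB j) : Fin (2 * n)) : ℕ)) :
    ∀ r : Fin (2 * n), ((σ.symm (pA j) : Fin (2 * n)) : ℕ) < (r : ℕ) → (r : ℕ) < z2 →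
      ∃ k, σ r = pA k := by
  set rj := σ.symm (pA j) with hrj
  have hbase : σ rj = pA j := by rw [hrj]; simp
  have main : ∀ N : ℕ, ∀ r : Fin (2 * n), (r : ℕ) = N → (rj : ℕ) < (r : ℕ) → (r : ℕ) < z2 →
      ∃ k, σ r = pA k := by
    intro N
    induction N using Nat.strong_induction_on with
    | _ N ihN =>
      intro r hrN hr1 hr2
      rcases tail_lemma hσ hLA gap hj1 hbase r hr1 hr2 with h | ⟨k, hk, hkp⟩
      · exact h
      · exfalso
        -- σ r closes the pair opened at r-1
        rcases eq_or_lt_of_le (Nat.succ_le_of_lt hr1) with heq | hlt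
        · -- r - 1 = rj : then k = j and pB j is inside the zone
          have : σ.symm (pA k) = rj := by
            apply Fin.ext; omega
          have hkj : k = j := by
            apply pA_inj
            rw [← hbase, ← this]; simp
          rw [hkj] at hk
          have : σ.symm (pB j) = r := by rw [← hk]; simp
          rw [this] at hplain
          omega
        · -- r - 1 > rj : the letter at r-1 = pos (pA k) is an opener (IH);
          -- the letter at r-2 is an opener as well, and LB gives a contradiction
          have hr1pos : 0 < (r : ℕ) - 1 := by omega
          set rpp : Fin (2 * n) := ⟨(r : ℕ) - 2, by have := r.isLt; omega⟩ with hrpp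
          have hrppv : (rpp : ℕ) = (r : ℕ) - 2 := rfl
          -- σ rpp is an opener (pA k0): either rpp = rj, or IH
          have hrpplt : (rpp : ℕ) < z2 := by omega
          have hopp : ∃ k0, σ rpp = pA k0 := by
            rcases eq_or_lt_of_le (show (rj : ℕ) ≤ (rpp : ℕ) by omega) with heq2 | hlt2
            · refine ⟨j, ?_⟩
              have : rpp = rj := Fin.ext heq2.symm
              rw [this, hbase]
            · exact ihN (rpp : ℕ) (by omega) rpp rfl hlt2 hrpplt
          obtain ⟨k0, hk0⟩ := hopp
          -- apply LB at q = rpp : letters at rpp, rpp+1 are openers pA k0, pA k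
          have hq1 : (rpp : ℕ) + 1 < 2 * n := by have := r.isLt; omega
          have hnotS : ((rpp : ℕ) + 1) ∉ S := by
            intro hs
            rcases gap _ hs with h | h <;> omega
          have hrpeq : ((⟨(rpp : ℕ) + 1, hq1⟩ : Fin (2 * n)) : ℕ) = (r : ℕ) - 1 := by
            simp [hrppv]; omega
          have hσrp : σ ⟨(rpp : ℕ) + 1, hq1⟩ = pA k := by
            have : (⟨(rpp : ℕ) + 1, hq1⟩ : Fin (2 * n)) = σ.symm (pA k) := by
              apply Fin.ext; rw [hrpeq]; omega
            rw [this]; simp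
          have hlb := hLB rpp hq1 hnotS k0 k hk0 hσrp
          -- pB k0 must lie strictly between rpp and pos (pB k) = r : impossible
          have hBk : σ.symm (pB k) = r := by rw [← hk]; simp
          rw [hBk] at hlb
          have hABk0 := hσ.1 k0
          have hk0pos : σ.symm (pA k0) = rpp := by rw [← hk0]; simp
          rw [hk0pos] at hABk0
          have h1 := Fin.lt_def.mp hABk0
          -- so pos (pB k0) ∈ (r-2, r) ; it is not r-1 (an opener sits there), hence = ?
          have h2 : ((σ.symm (pB k0) : Fin (2 * n)) : ℕ) ≠ (r : ℕ) - 1 := by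
            intro hc
            have : σ.symm (pB k0) = σ.symm (pA k) := by
              apply Fin.ext; omega
            exact pA_ne_pB k k0 (σ.symm.injective this).symm
          omega
  intro r h1 h2
  exact main (r : ℕ) r rfl h1 h2

/-- Two pairs opened in the same zone whose partners both lie beyond the zone
close in the order they were opened. -/
lemma plainMono {σ : Equiv.Perm (Fin (2 * n))} (hσ : IsCanonical σ) {S : Set ℕ}
    (hLA : LMA σ S) (hLB : LMB σ S) {z1 z2 : ℕ} (gap : ∀ s ∈ S, s ≤ z1 ∨ z2 ≤ s)
    {j i : Fin n} (hji : j < i)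
    (hj1 : z1 ≤ ((σ.symm (pA j) : Fin (2 * n)) : ℕ))
    (hi2 : ((σ.symm (pA i) : Fin (2 * n)) : ℕ) < z2)
    (hplainj : z2 ≤ ((σ.symm (pB j) : Fin (2 * n)) : ℕ)) :
    ((σ.symm (pB j) : Fin (2 * n)) : ℕ) < ((σ.symm (pB i) : Fin (2 * n)) : ℕ) := by
  set rj := σ.symm (pA j) with hrj
  have hbase : σ rj = pA j := by rw [hrj]; simp
  have hrjri : (rj : ℕ) < ((σ.symm (pA i) : Fin (2 * n)) : ℕ) :=
    Fin.lt_def.mp ((canon_mono_iff hσ).mpr hji)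
  have main : ∀ N : ℕ, ∀ r : Fin (2 * n), (r : ℕ) = N →
      (rj : ℕ) < (r : ℕ) → (r : ℕ) ≤ ((σ.symm (pA i) : Fin (2 * n)) : ℕ) →
      ∀ k : Fin n, σ r = pA k →
      ((σ.symm (pB j) : Fin (2 * n)) : ℕ) < ((σ.symm (pB k) : Fin (2 * n)) : ℕ) := by
    intro N
    induction N using Nat.strong_induction_on with
    | _ N ihN =>
      intro r hrN hr1 hr2 k hk
      have hrz2 : (r : ℕ) < z2 := by omega
      have hq1 : ∀ m : ℕ, m + 1 = (r : ℕ) → m + 1 < 2 * n := by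
        intro m hm; have := r.isLt; omega
      rcases eq_or_lt_of_le (Nat.succ_le_of_lt hr1) with heq | hlt
      · -- r = rj + 1 : apply LB at rj directly
        have hq1' : (rj : ℕ) + 1 < 2 * n := by have := r.isLt; omega
        have hre : (⟨(rj : ℕ) + 1, hq1'⟩ : Fin (2 * n)) = r := by
          apply Fin.ext; simp; omega
        have hnotS : ((rj : ℕ) + 1) ∉ S := by
          intro hs; rcases gap _ hs with h | h <;> omega
        exact hLB rj hq1' hnotS j k hbase (by rw [hre]; exact hk)
      · -- the letter before r is an opener pA k' with pB j < pB k' < pB k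
        set rp : Fin (2 * n) := ⟨(r : ℕ) - 1, by have := r.isLt; omega⟩ with hrp
        have hrpv : (rp : ℕ) = (r : ℕ) - 1 := rfl
        obtain ⟨k', hk'⟩ := allO_lemma hσ hLA hLB gap hj1 hplainj rp (by omega) (by omega)
        have ih := ihN (rp : ℕ) (by omega) rp rfl (by omega) (by omega) k' hk'
        have hq1' : (rp : ℕ) + 1 < 2 * n := by have := r.isLt; omega
        have hre : (⟨(rp : ℕ) + 1, hq1'⟩ : Fin (2 * n)) = r := by
          apply Fin.ext; simp [hrpv]; omega
        have hnotS : ((rp : ℕ) + 1) ∉ S := by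
          intro hs; rcases gap _ hs with h | h <;> omega
        have hlb := hLB rp hq1' hnotS k' k hk' (by rw [hre]; exact hk)
        omega
  have hfin := main ((σ.symm (pA i) : Fin (2 * n)) : ℕ) (σ.symm (pA i)) rfl hrjri le_rfl i (by simp)
  exact hfin

/-- In a zone which begins with a closer, all letters of the zone are at least
as large as that closer. -/
lemma minval_lemma {σ : Equiv.Perm (Fin (2 * n))} (hσ : IsCanonical σ) {S : Set ℕ}
    (hLA : LMA σ S) {z1 z2 : ℕ} (gap : ∀ s ∈ S, s ≤ z1 ∨ z2 ≤ s)
    {p0 : Fin (2 * n)} (hp0 : z1 ≤ (p0 : ℕ)) {x : Fin n} (hb : σ p0 = pB x)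
    (hx : ((σ.symm (pA x) : Fin (2 * n)) : ℕ) < (p0 : ℕ)) :
    ∀ r : Fin (2 * n), (p0 : ℕ) ≤ (r : ℕ) → (r : ℕ) < z2 →
      ((σ p0 : Fin (2 * n)) : ℕ) ≤ ((σ r : Fin (2 * n)) : ℕ) := by
  have main : ∀ N : ℕ, ∀ r : Fin (2 * n), (r : ℕ) = N → (p0 : ℕ) ≤ (r : ℕ) → (r : ℕ) < z2 →
      ((σ p0 : Fin (2 * n)) : ℕ) ≤ ((σ r : Fin (2 * n)) : ℕ) := by
    intro N
    induction N using Nat.strong_induction_on with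
    | _ N ihN =>
      intro r hrN hr1 hr2
      rcases eq_or_lt_of_le hr1 with heq | hlt
      · have : p0 = r := Fin.ext heq
        rw [this]
      · set rp : Fin (2 * n) := ⟨(r : ℕ) - 1, by have := r.isLt; omega⟩ with hrp
        have hrpv : (rp : ℕ) = (r : ℕ) - 1 := rfl
        have ih := ihN (rp : ℕ) (by omega) rp rfl (by omega) (by omega)
        rcases pa_or_pb (σ r) with hop | hcl
        · -- opener : its index is larger than x
          have hxk : x < pidx (σ r) := by
            rw [← canon_mono_iff hσ]
            apply Fin.lt_def.mpr
            have h1 : σ.symm (pA (pidx (σ r))) = r := by rw [← hop]; simp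
            rw [h1]
            omega
          rw [hb, hop]
          have := Fin.lt_def.mp hxk
          simp only [pA_val, pB_val]
          omega
        · set k := pidx (σ r) with hk
          have hposr : σ.symm (pB k) = r := by rw [← hcl]; simp
          have hAk : ((σ.symm (pA k) : Fin (2 * n)) : ℕ) < (r : ℕ) := by
            have := hσ.1 k
            rw [hposr] at this
            exact Fin.lt_def.mp this
          rcases eq_or_lt_of_le (Nat.succ_le_of_lt hAk) with heq2 | hlt2
          · -- pA k sits at r - 1 : value of pB k exceeds value at r-1 ≥ b
            have hσrp : σ rp = pA k := by
              have : rp = σ.symm (pA k) := by apply Fin.ext; rw [hrpv]; omega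
              rw [this]; simp
            rw [hσrp] at ih
            rw [hcl]
            rw [hb] at ih
            simp only [pA_val, pB_val] at ih ⊢
            rw [hb]
            simp only [pB_val]
            omega
          · -- use LA at rp
            have hq1' : (rp : ℕ) + 1 < 2 * n := by have := r.isLt; omega
            have hre : (⟨(rp : ℕ) + 1, hq1'⟩ : Fin (2 * n)) = r := by
              apply Fin.ext; simp [hrpv]; omega
            have hnotS : ((rp : ℕ) + 1) ∉ S := by
              intro hs; rcases gap _ hs with h | h <;> omega
            have hlem := hLA rp hq1' hnotS k (by rw [hre]; exact hcl) (by rw [hrpv]; omega)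
            rw [hre] at hlem
            have := Fin.lt_def.mp hlem
            omega
  intro r h1 h2
  exact main (r : ℕ) r rfl h1 h2

end L9a

section L9b
variable {n : ℕ}

lemma gp_pair {g : Equiv.Perm (Fin (2 * n))} (hg : PP g) (i : Fin n) :
    (pA (gp g i) = g (pA i) ∧ pB (gp g i) = g (pB i)) ∨
    (pA (gp g i) = g (pB i) ∧ pB (gp g i) = g (pA i)) := by
  have hne : g (pA i) ≠ g (pB i) := g.injective.ne_iff.mpr (pA_ne_pB i i)
  rcases gp_mem hg i with hA | hA
  · left
    refine ⟨hA, ?_⟩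
    rcases gp_memB hg i with hB | hB
    · exfalso
      have : pA (gp g i) = pB (gp g i) := by rw [hA, hB]
      exact pA_ne_pB _ _ this
    · exact hB
  · right
    refine ⟨hA, ?_⟩
    rcases gp_memB hg i with hB | hB
    · exact hB
    · exfalso
      have : pA (gp g i) = pB (gp g i) := by rw [hA, hB]
      exact pA_ne_pB _ _ this

lemma gp_inv_gp {g : Equiv.Perm (Fin (2 * n))} (hg : PP g) (i : Fin n) :
    gp g⁻¹ (gp g i) = i := by
  have e : gp g⁻¹ (gp g i) = pidx (g⁻¹ (pA (gp g i))) := rfl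
  rw [e]
  rcases gp_mem hg i with h | h
  · rw [h]; simp [pidx_pA]
  · rw [h]; simp [pidx_pB]

/-- prefix membership predicate transported along a pair permutation -/
def Sb {n : ℕ} (τ σ g : Equiv.Perm (Fin (2 * n))) (u : ℕ) : Prop :=
  ∀ x : Fin (2 * n), ((τ.symm x : Fin (2 * n)) : ℕ) < u ↔ ((σ.symm (g x) : Fin (2 * n)) : ℕ) < u

lemma count_lemma {σ τ g : Equiv.Perm (Fin (2 * n))} (hσ : IsCanonical σ) (hτ : IsCanonical τ)
    (hgPP : PP g) {u s : ℕ} (hu : Sb τ σ g u) (hs : Sb τ σ g s) :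
    (Finset.univ.filter (fun i : Fin n =>
        ((τ.symm (pA i) : Fin (2 * n)) : ℕ) < u ∧ ((τ.symm (pB i) : Fin (2 * n)) : ℕ) < s)).card
    = (Finset.univ.filter (fun i : Fin n =>
        ((σ.symm (pA i) : Fin (2 * n)) : ℕ) < u ∧ ((σ.symm (pB i) : Fin (2 * n)) : ℕ) < s)).card := by
  have htrans : ∀ i : Fin n,
      ((((τ.symm (pA i) : Fin (2 * n)) : ℕ) < u ∧ ((τ.symm (pB i) : Fin (2 * n)) : ℕ) < s)
      ↔ (((σ.symm (pA (gp g i)) : Fin (2 * n)) : ℕ) < u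
          ∧ ((σ.symm (pB (gp g i)) : Fin (2 * n)) : ℕ) < s)) := by
    intro i
    have KAτ := Fin.lt_def.mp (hτ.1 i)
    have KAσ := Fin.lt_def.mp (hσ.1 (gp g i))
    rcases gp_pair hgPP i with ⟨h1, h2⟩ | ⟨h1, h2⟩
    · rw [h1, h2]
      exact and_congr (hu (pA i)) (hs (pB i))
    · rw [h1, h2] at KAσ ⊢
      constructor
      · rintro ⟨x1, x2⟩
        exact ⟨lt_trans KAσ ((hu (pA i)).mp x1), (hs (pA i)).mp (lt_trans KAτ x2)⟩
      · rintro ⟨x1, x2⟩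
        exact ⟨lt_trans KAτ ((hu (pB i)).mpr x1), (hs (pB i)).mpr (lt_trans KAσ x2)⟩
  apply Finset.card_bij' (fun i _ => gp g i) (fun i _ => gp g⁻¹ i)
  · intro a ha
    simp only [Finset.mem_filter, Finset.mem_univ, true_and] at ha ⊢
    exact (htrans a).mp ha
  · intro b hb
    simp only [Finset.mem_filter, Finset.mem_univ, true_and] at hb ⊢
    have := htrans (gp g⁻¹ b)
    have hrt : gp g (gp g⁻¹ b) = b := by
      have := gp_inv_gp (PP.inv hgPP) b
      rwa [inv_inv] at this
    rw [hrt] at this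
    exact this.mpr hb
  · intro a _
    exact gp_inv_gp hgPP a
  · intro b _
    have := gp_inv_gp (PP.inv hgPP) b
    rwa [inv_inv] at this

end L9b

section L9c
variable {n : ℕ}

lemma key_contradiction {σ τ g : Equiv.Perm (Fin (2 * n))} (hσ : IsCanonical σ)
    (hτ : IsCanonical τ) {S : Set ℕ} (hSb : ∀ s ∈ S, 1 ≤ s ∧ s ≤ 2 * n - 1)
    (hLA : LMA σ S) (hLB : LMB σ S) (hgPP : PP g) (hg : ∀ s ∈ S, Sb τ σ g s)
    {p : Fin (2 * n)} (hagree : ∀ j : Fin (2 * n), (j : ℕ) < (p : ℕ) → τ j = σ j)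
    (hab : τ p < σ p) : False := by
  classical
  have habv := Fin.lt_def.mp hab
  have hP2n : (p : ℕ) < 2 * n := p.isLt
  -- common-prefix transfers
  have ct1 : ∀ x : Fin (2 * n), ((σ.symm x : Fin (2 * n)) : ℕ) < (p : ℕ) →
      τ.symm x = σ.symm x := by
    intro x hx
    have h1 : τ (σ.symm x) = σ (σ.symm x) := hagree _ hx
    rw [Equiv.apply_symm_apply] at h1
    rw [Equiv.symm_apply_eq]
    exact h1.symm
  have ct2 : ∀ x : Fin (2 * n), ((τ.symm x : Fin (2 * n)) : ℕ) < (p : ℕ) →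
      σ.symm x = τ.symm x := by
    intro x hx
    have h1 : τ (τ.symm x) = σ (τ.symm x) := hagree _ hx
    rw [Equiv.apply_symm_apply] at h1
    rw [Equiv.symm_apply_eq]
    exact h1
  -- the left checkpoint
  obtain ⟨zz, hzz_le, hzz_max, hzz_mem⟩ : ∃ zz : ℕ, zz ≤ (p : ℕ) ∧
      (∀ s ∈ S, s ≤ (p : ℕ) → s ≤ zz) ∧ (zz ∈ S ∨ zz = 0) := by
    refine ⟨Nat.findGreatest (· ∈ S) (p : ℕ), Nat.findGreatest_le (p : ℕ),
      fun s hs hsP => Nat.le_findGreatest hsP hs, ?_⟩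
    rcases eq_or_ne (Nat.findGreatest (· ∈ S) (p : ℕ)) 0 with h0 | h0
    · exact Or.inr h0
    · exact Or.inl (Nat.findGreatest_of_ne_zero rfl h0)
  -- the right checkpoint
  obtain ⟨sS, hsS_ge, hsS_le, hsS_min, hsS_mem⟩ : ∃ sS : ℕ, (p : ℕ) + 1 ≤ sS ∧ sS ≤ 2 * n ∧
      (∀ s ∈ S, (p : ℕ) + 1 ≤ s → sS ≤ s) ∧ (sS ∈ S ∨ sS = 2 * n) := by
    by_cases hex : ∃ s, s ∈ S ∧ (p : ℕ) + 1 ≤ s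
    · refine ⟨Nat.find hex, (Nat.find_spec hex).2, ?_,
        fun s hs hps => Nat.find_min' hex ⟨hs, hps⟩, Or.inl (Nat.find_spec hex).1⟩
      have := (hSb _ (Nat.find_spec hex).1).2
      omega
    · exact ⟨2 * n, by omega, le_rfl, fun s hs hps => absurd ⟨s, hs, hps⟩ hex, Or.inr rfl⟩
  have gap : ∀ s ∈ S, s ≤ zz ∨ sS ≤ s := by
    intro s hs
    rcases le_or_gt s (p : ℕ) with h | h
    · exact Or.inl (hzz_max s hs h)
    · exact Or.inr (hsS_min s hs (by omega))
  have Sb2n : Sb τ σ g (2 * n) := by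
    intro x
    constructor <;> intro _
    · exact (σ.symm (g x)).isLt
    · exact (τ.symm x).isLt
  have Sb0 : Sb τ σ g 0 := by
    intro x
    exact iff_of_false (by omega) (by omega)
  have SbsS : Sb τ σ g sS := by
    rcases hsS_mem with h | h
    · exact hg _ h
    · rw [h]; exact Sb2n
  -- τ p is a closer pB j
  have hτp : τ.symm (τ p) = p := by simp
  have hσp : σ.symm (σ p) = p := by simp
  have hacl : ∃ j : Fin n, τ p = pB j := by
    rcases pa_or_pb (τ p) with hop | hcl
    · exfalso
      have h2 : τ.symm (pA (pidx (τ p))) = p := by rw [← hop]; exact hτp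
      rcases pa_or_pb (σ p) with hbop | hbcl
      · -- both openers : same index, contradiction with hab
        have h1 : σ.symm (pA (pidx (σ p))) = p := by rw [← hbop]; exact hσp
        have c1 := openval hσ h1
        have c2 := openval hτ h2
        have hopeneq : (Finset.univ.filter (fun m : Fin n =>
            ((σ.symm (pA m) : Fin (2 * n)) : ℕ) < (p : ℕ)))
            = (Finset.univ.filter (fun m : Fin n =>
            ((τ.symm (pA m) : Fin (2 * n)) : ℕ) < (p : ℕ))) := by
          ext m
          simp only [Finset.mem_filter, Finset.mem_univ, true_and]
          constructor
          · intro hm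
            rw [ct1 (pA m) hm]
            exact hm
          · intro hm
            rw [ct2 (pA m) hm]
            exact hm
        rw [hopeneq] at c1
        have heq : pidx (σ p) = pidx (τ p) := Fin.ext (c1.symm.trans c2)
        rw [hop, hbop, heq] at habv
        omega
      · -- a opener, b closer : value contradiction
        have hxA : ((σ.symm (pA (pidx (σ p))) : Fin (2 * n)) : ℕ) < (p : ℕ) := by
          have := Fin.lt_def.mp (hσ.1 (pidx (σ p)))
          have h1 : σ.symm (pB (pidx (σ p))) = p := by rw [← hbcl]; exact hσp
          rw [h1] at this
          exact this
        have hτx : τ.symm (pA (pidx (σ p))) = σ.symm (pA (pidx (σ p))) := ct1 _ hxA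
        have hxlt : pidx (σ p) < pidx (τ p) := by
          rw [← canon_mono_iff hτ]
          apply Fin.lt_def.mpr
          rw [hτx, h2]
          exact hxA
        have := Fin.lt_def.mp hxlt
        rw [hop, hbcl] at habv
        simp only [pA_val, pB_val] at habv
        omega
    · exact ⟨pidx (τ p), hcl⟩
  obtain ⟨j, haj⟩ := hacl
  have hτBj : τ.symm (pB j) = p := by rw [← haj]; exact hτp
  have hτAj_lt : ((τ.symm (pA j) : Fin (2 * n)) : ℕ) < (p : ℕ) := by
    have := Fin.lt_def.mp (hτ.1 j)
    rw [hτBj] at this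
    exact this
  have hσAj : σ.symm (pA j) = τ.symm (pA j) := ct2 _ hτAj_lt
  have hrjP : ((σ.symm (pA j) : Fin (2 * n)) : ℕ) < (p : ℕ) := by rw [hσAj]; exact hτAj_lt
  have hBj_ne : σ p ≠ pB j := by
    intro h
    rw [← haj] at h
    rw [h] at habv
    omega
  have hBjP : (p : ℕ) ≤ ((σ.symm (pB j) : Fin (2 * n)) : ℕ) := by
    by_contra h
    push_neg at h
    have := ct1 (pB j) h
    rw [hτBj] at this
    omega
  -- the common count-contradiction block, for "old" j (opened before zz)
  have countBlock : ((σ.symm (pA j) : Fin (2 * n)) : ℕ) < zz →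
      (sS ≤ ((σ.symm (pB j) : Fin (2 * n)) : ℕ)) →
      (∀ u1' u1 : ℕ, u1' ≤ ((σ.symm (pA j) : Fin (2 * n)) : ℕ) →
        ((σ.symm (pA j) : Fin (2 * n)) : ℕ) < u1 → u1 ≤ zz →
        (∀ s ∈ S, s ≤ u1' ∨ u1 ≤ s) →
        ∀ i : Fin n, u1' ≤ ((σ.symm (pA i) : Fin (2 * n)) : ℕ) →
          ((σ.symm (pA i) : Fin (2 * n)) : ℕ) < u1 →
          ((σ.symm (pB i) : Fin (2 * n)) : ℕ) < sS →
          ((σ.symm (pB i) : Fin (2 * n)) : ℕ) < (p : ℕ)) →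
      False := by
    intro hrjzz hBj_sS hclaim
    have hzzS : zz ∈ S := by
      rcases hzz_mem with h | h
      · exact h
      · omega
    have hex1 : ∃ s, s ∈ S ∧ ((σ.symm (pA j) : Fin (2 * n)) : ℕ) + 1 ≤ s :=
      ⟨zz, hzzS, by omega⟩
    set u1 := Nat.find hex1 with hu1def
    have hu1S : u1 ∈ S := (Nat.find_spec hex1).1
    have hu1rj : ((σ.symm (pA j) : Fin (2 * n)) : ℕ) < u1 := (Nat.find_spec hex1).2
    have hu1zz : u1 ≤ zz := Nat.find_min' hex1 ⟨hzzS, by omega⟩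
    set u1' := Nat.findGreatest (· ∈ S) ((σ.symm (pA j) : Fin (2 * n)) : ℕ) with hu1'def
    have hu1'rj : u1' ≤ ((σ.symm (pA j) : Fin (2 * n)) : ℕ) := Nat.findGreatest_le _
    have hu1'mem : u1' ∈ S ∨ u1' = 0 := by
      rcases eq_or_ne u1' 0 with h0 | h0
      · exact Or.inr h0
      · exact Or.inl (Nat.findGreatest_of_ne_zero rfl h0)
    have gap1 : ∀ s ∈ S, s ≤ u1' ∨ u1 ≤ s := by
      intro s hs
      rcases le_or_gt s ((σ.symm (pA j) : Fin (2 * n)) : ℕ) with h | h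
      · exact Or.inl (Nat.le_findGreatest h hs)
      · exact Or.inr (Nat.find_min' hex1 ⟨hs, by omega⟩)
    have Sbu1 : Sb τ σ g u1 := hg _ hu1S
    have Sbu1' : Sb τ σ g u1' := by
      rcases hu1'mem with h | h
      · exact hg _ h
      · rw [h]
        intro x
        exact iff_of_false (by omega) (by omega)
    have C1 := count_lemma hσ hτ hgPP Sbu1 SbsS
    have C2 := count_lemma hσ hτ hgPP Sbu1' SbsS
    -- split filters
    have hsplit : ∀ w : Equiv.Perm (Fin (2 * n)),
        (Finset.univ.filter (fun i : Fin n =>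
          ((w.symm (pA i) : Fin (2 * n)) : ℕ) < u1 ∧ ((w.symm (pB i) : Fin (2 * n)) : ℕ) < sS)).card
        = (Finset.univ.filter (fun i : Fin n =>
          ((w.symm (pA i) : Fin (2 * n)) : ℕ) < u1' ∧ ((w.symm (pB i) : Fin (2 * n)) : ℕ) < sS)).card
        + (Finset.univ.filter (fun i : Fin n =>
          u1' ≤ ((w.symm (pA i) : Fin (2 * n)) : ℕ) ∧ ((w.symm (pA i) : Fin (2 * n)) : ℕ) < u1
            ∧ ((w.symm (pB i) : Fin (2 * n)) : ℕ) < sS)).card := by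
      intro w
      rw [← Finset.card_union_of_disjoint]
      · congr 1
        ext i
        simp only [Finset.mem_filter, Finset.mem_univ, true_and, Finset.mem_union]
        constructor
        · rintro ⟨h1, h2⟩
          rcases lt_or_ge ((w.symm (pA i) : Fin (2 * n)) : ℕ) u1' with h3 | h3
          · exact Or.inl ⟨h3, h2⟩
          · exact Or.inr ⟨h3, h1, h2⟩
        · rintro (⟨h1, h2⟩ | ⟨h1, h2, h3⟩)
          · exact ⟨by omega, h2⟩
          · exact ⟨h2, h3⟩
      · rw [Finset.disjoint_left]
        intro i hi1 hi2
        simp only [Finset.mem_filter, Finset.mem_univ, true_and] at hi1 hi2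
        omega
    have hCeq : (Finset.univ.filter (fun i : Fin n =>
          u1' ≤ ((τ.symm (pA i) : Fin (2 * n)) : ℕ) ∧ ((τ.symm (pA i) : Fin (2 * n)) : ℕ) < u1
            ∧ ((τ.symm (pB i) : Fin (2 * n)) : ℕ) < sS)).card
        = (Finset.univ.filter (fun i : Fin n =>
          u1' ≤ ((σ.symm (pA i) : Fin (2 * n)) : ℕ) ∧ ((σ.symm (pA i) : Fin (2 * n)) : ℕ) < u1
            ∧ ((σ.symm (pB i) : Fin (2 * n)) : ℕ) < sS)).card := by
      have e1 := hsplit σ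
      have e2 := hsplit τ
      omega
    -- σ-side is contained in τ-side, and τ-side additionally contains j
    have hsub : Finset.univ.filter (fun i : Fin n =>
          u1' ≤ ((σ.symm (pA i) : Fin (2 * n)) : ℕ) ∧ ((σ.symm (pA i) : Fin (2 * n)) : ℕ) < u1
            ∧ ((σ.symm (pB i) : Fin (2 * n)) : ℕ) < sS)
        ⊆ Finset.univ.filter (fun i : Fin n =>
          u1' ≤ ((τ.symm (pA i) : Fin (2 * n)) : ℕ) ∧ ((τ.symm (pA i) : Fin (2 * n)) : ℕ) < u1
            ∧ ((τ.symm (pB i) : Fin (2 * n)) : ℕ) < sS) := by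
      intro i hi
      simp only [Finset.mem_filter, Finset.mem_univ, true_and] at hi ⊢
      obtain ⟨h1, h2, h3⟩ := hi
      have hBlt : ((σ.symm (pB i) : Fin (2 * n)) : ℕ) < (p : ℕ) :=
        hclaim u1' u1 hu1'rj hu1rj hu1zz gap1 i h1 h2 h3
      have hAlt : ((σ.symm (pA i) : Fin (2 * n)) : ℕ) < (p : ℕ) := by omega
      rw [ct1 (pA i) hAlt, ct1 (pB i) hBlt]
      exact ⟨h1, h2, by omega⟩
    have hjmem : j ∈ Finset.univ.filter (fun i : Fin n =>
          u1' ≤ ((τ.symm (pA i) : Fin (2 * n)) : ℕ) ∧ ((τ.symm (pA i) : Fin (2 * n)) : ℕ) < u1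
            ∧ ((τ.symm (pB i) : Fin (2 * n)) : ℕ) < sS) := by
      simp only [Finset.mem_filter, Finset.mem_univ, true_and]
      rw [← hσAj, hτBj]
      exact ⟨hu1'rj, hu1rj, by omega⟩
    have hjnot : j ∉ Finset.univ.filter (fun i : Fin n =>
          u1' ≤ ((σ.symm (pA i) : Fin (2 * n)) : ℕ) ∧ ((σ.symm (pA i) : Fin (2 * n)) : ℕ) < u1
            ∧ ((σ.symm (pB i) : Fin (2 * n)) : ℕ) < sS) := by
      simp only [Finset.mem_filter, Finset.mem_univ, true_and]
      intro hcon
      omega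
    have hins := Finset.card_le_card (Finset.insert_subset hjmem hsub)
    rw [Finset.card_insert_of_notMem hjnot] at hins
    omega
  -- main case split : σ p closer or opener
  rcases pa_or_pb (σ p) with hbop | hbcl
  · -- σ p = pA x : opener
    have hBj_sS : sS ≤ ((σ.symm (pB j) : Fin (2 * n)) : ℕ) := by
      by_contra h
      push_neg at h
      have h3 : σ (σ.symm (pB j)) = pB j := by simp
      rcases eq_or_lt_of_le hBjP with heq | hlt
      · have : σ.symm (pB j) = p := Fin.ext heq.symm
        rw [this] at h3
        exact hBj_ne h3
      · rcases tail_lemma hσ hLA gap (r0 := p) hzz_le hbop (σ.symm (pB j)) hlt h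
          with ⟨k, hk⟩ | ⟨k, hk, hkp⟩
        · rw [h3] at hk
          exact pA_ne_pB k j hk.symm
        · rw [h3] at hk
          have hkj : k = j := pB_inj hk.symm
          rw [hkj] at hkp
          omega
    rcases lt_or_ge ((σ.symm (pA j) : Fin (2 * n)) : ℕ) zz with hrjzz | hzzrj
    · -- old j : count block, claim via tail lemma
      apply countBlock hrjzz hBj_sS
      intro u1' u1 hu1' hu1 hu1zz gap1 i h1 h2 h3
      by_contra h4
      push_neg at h4
      have h5 : σ (σ.symm (pB i)) = pB i := by simp
      rcases eq_or_lt_of_le h4 with heq | hlt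
      · have : σ.symm (pB i) = p := Fin.ext heq.symm
        rw [this, hbop] at h5
        exact pA_ne_pB _ _ h5
      · rcases tail_lemma hσ hLA gap (r0 := p) hzz_le hbop (σ.symm (pB i)) hlt h3
          with ⟨k, hk⟩ | ⟨k, hk, hkp⟩
        · rw [h5] at hk
          exact pA_ne_pB k i hk.symm
        · rw [h5] at hk
          have hki : k = i := pB_inj hk.symm
          rw [hki] at hkp
          omega
    · -- j opened in the zone : everything after is an opener, count at (sS, sS)
      have hall := allO_lemma hσ hLA hLB gap (j := j) hzzrj hBj_sS
      have hDeq : (Finset.univ.filter (fun i : Fin n =>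
            ((σ.symm (pA i) : Fin (2 * n)) : ℕ) < sS ∧ ((σ.symm (pB i) : Fin (2 * n)) : ℕ) < sS))
          = (Finset.univ.filter (fun i : Fin n =>
            ((σ.symm (pB i) : Fin (2 * n)) : ℕ) < (p : ℕ))) := by
        ext i
        simp only [Finset.mem_filter, Finset.mem_univ, true_and]
        constructor
        · rintro ⟨h1, h2⟩
          by_contra h4
          push_neg at h4
          have h5 : σ (σ.symm (pB i)) = pB i := by simp
          obtain ⟨k, hk⟩ := hall (σ.symm (pB i)) (by omega) h2
          rw [h5] at hk
          exact pA_ne_pB k i hk.symm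
        · intro h1
          have h6 := Fin.lt_def.mp (hσ.1 i)
          omega
      have hcount := count_lemma hσ hτ hgPP SbsS SbsS
      rw [hDeq] at hcount
      -- τ side contains the σ D-set and j
      have hsub : Finset.univ.filter (fun i : Fin n =>
            ((σ.symm (pB i) : Fin (2 * n)) : ℕ) < (p : ℕ))
          ⊆ Finset.univ.filter (fun i : Fin n =>
            ((τ.symm (pA i) : Fin (2 * n)) : ℕ) < sS ∧ ((τ.symm (pB i) : Fin (2 * n)) : ℕ) < sS) := by
        intro i hi
        simp only [Finset.mem_filter, Finset.mem_univ, true_and] at hi ⊢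
        have h6 := Fin.lt_def.mp (hσ.1 i)
        have hAlt : ((σ.symm (pA i) : Fin (2 * n)) : ℕ) < (p : ℕ) := by omega
        rw [ct1 (pA i) hAlt, ct1 (pB i) hi]
        omega
      have hjmem : j ∈ Finset.univ.filter (fun i : Fin n =>
            ((τ.symm (pA i) : Fin (2 * n)) : ℕ) < sS ∧ ((τ.symm (pB i) : Fin (2 * n)) : ℕ) < sS) := by
        simp only [Finset.mem_filter, Finset.mem_univ, true_and]
        rw [hτBj]
        constructor
        · rw [← hσAj]; omega
        · omega
      have hjnot : j ∉ Finset.univ.filter (fun i : Fin n =>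
            ((σ.symm (pB i) : Fin (2 * n)) : ℕ) < (p : ℕ)) := by
        simp only [Finset.mem_filter, Finset.mem_univ, true_and]
        omega
      have hins := Finset.card_le_card (Finset.insert_subset hjmem hsub)
      rw [Finset.card_insert_of_notMem hjnot] at hins
      omega
  · -- σ p = pB x : closer
    have hσBx : σ.symm (pB (pidx (σ p))) = p := by rw [← hbcl]; exact hσp
    have hxA : ((σ.symm (pA (pidx (σ p))) : Fin (2 * n)) : ℕ) < (p : ℕ) := by
      have := Fin.lt_def.mp (hσ.1 (pidx (σ p)))
      rw [hσBx] at this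
      exact this
    have hjx : j < pidx (σ p) := by
      rw [haj, hbcl] at habv
      simp only [pB_val] at habv
      exact Fin.lt_def.mpr (by omega)
    have minv := minval_lemma hσ hLA gap (p0 := p) hzz_le hbcl hxA
    have hBj_sS : sS ≤ ((σ.symm (pB j) : Fin (2 * n)) : ℕ) := by
      by_contra h
      push_neg at h
      have h2 := minv (σ.symm (pB j)) hBjP h
      have h3 : σ (σ.symm (pB j)) = pB j := by simp
      rw [h3, hbcl] at h2
      simp only [pB_val] at h2
      have := Fin.lt_def.mp hjx
      omega
    rcases lt_or_ge ((σ.symm (pA j) : Fin (2 * n)) : ℕ) zz with hrjzz | hzzrj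
    · -- old j : count block, claim via minval + plainMono
      apply countBlock hrjzz hBj_sS
      intro u1' u1 hu1' hu1 hu1zz gap1 i h1 h2 h3
      by_contra h4
      push_neg at h4
      have h5 : σ (σ.symm (pB i)) = pB i := by simp
      have h6 := minv (σ.symm (pB i)) h4 h3
      rw [h5, hbcl] at h6
      simp only [pB_val] at h6
      have hji : j < i := by
        have := Fin.lt_def.mp hjx
        exact Fin.lt_def.mpr (by omega)
      have hpm := plainMono hσ hLA hLB gap1 hji hu1' h2 (by omega)
      omega
    · -- j opened in the zone : allO gives an opener at p, contradiction
      have hall := allO_lemma hσ hLA hLB gap (j := j) hzzrj hBj_sS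
      obtain ⟨k, hk⟩ := hall p (by omega) (by omega)
      rw [hbcl] at hk
      exact pA_ne_pB k (pidx (σ p)) hk.symm

end L9c

section L9d
variable {n : ℕ}

/-- the main combinatorial lemma : if a canonical word has an `S`-equivalent
lexicographically smaller canonical word, then it admits a lowering move at a
rank not in `S`. -/
lemma main_lemma {σ τ g : Equiv.Perm (Fin (2 * n))} (hσ : IsCanonical σ) (hτ : IsCanonical τ)
    {S : Set ℕ} (hSb : ∀ s ∈ S, 1 ≤ s ∧ s ≤ 2 * n - 1) (hgPP : PP g)
    (hg : ∀ s ∈ S, Sb τ σ g s) (hlt : PermLexLt τ σ) :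
    ∃ (q : Fin (2 * n)) (hq1 : (q : ℕ) + 1 < 2 * n), ((q : ℕ) + 1) ∉ S ∧
      ∃ h : Equiv.Perm (Fin (2 * n)), PP h ∧
        IsCanonical (h * (σ * Equiv.swap q ⟨(q : ℕ) + 1, hq1⟩)) ∧
        PermLexLt (h * (σ * Equiv.swap q ⟨(q : ℕ) + 1, hq1⟩)) σ := by
  by_contra hcon
  have hLA : LMA σ S := by
    intro q hq1 hqS k hw hpa
    by_contra hlem
    have hne : σ ⟨(q : ℕ) + 1, hq1⟩ ≠ σ q := by
      intro h
      have := σ.injective h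
      have := congrArg Fin.val this
      simp at this
    have hltvw : σ ⟨(q : ℕ) + 1, hq1⟩ < σ q := by
      rcases lt_or_gt_of_ne hne with h | h
      · exact h
      · exact absurd h hlem
    obtain ⟨hc1, hc2⟩ := lowA hσ hq1 hw hpa hltvw
    apply hcon
    refine ⟨q, hq1, hqS, 1, PP.one, ?_, ?_⟩
    · rw [one_mul]; exact hc1
    · rw [one_mul]; exact hc2
  have hLB : LMB σ S := by
    intro q hq1 hqS k k' hv hw
    by_contra hlem
    push_neg at hlem
    have hne : ((σ.symm (pB k') : Fin (2 * n)) : ℕ) ≠ ((σ.symm (pB k) : Fin (2 * n)) : ℕ) := by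
      intro h
      have h2 : σ.symm (pB k') = σ.symm (pB k) := Fin.ext h
      have h3 := σ.symm.injective h2
      have hkk : k' = k := by
        have := congrArg Fin.val h3
        simp only [pB] at this
        exact Fin.ext (by omega)
      rw [hkk] at hw
      have := σ.injective (hv.trans hw.symm)
      have := congrArg Fin.val this
      simp at this
    have hBlt : ((σ.symm (pB k') : Fin (2 * n)) : ℕ) < ((σ.symm (pB k) : Fin (2 * n)) : ℕ) := by
      omega
    obtain ⟨h, hPP, hc1, hc2⟩ := lowB hσ hq1 hv hw hBlt
    exact hcon ⟨q, hq1, hqS, h, hPP, hc1, hc2⟩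
  obtain ⟨p, hagree, hab⟩ := hlt
  exact key_contradiction hσ hτ hSb hLA hLB hgPP hg
    (fun j hj => hagree j (Fin.lt_def.mpr hj)) hab

end L9d



section Final
variable {n : ℕ}

lemma pr_mul_swap (σ : Equiv.Perm (Fin (2 * n))) (q : Fin (2 * n)) (hq1 : (q : ℕ) + 1 < 2 * n)
    {m : ℕ} (hm : m ≠ (q : ℕ) + 1) :
    pr (σ * Equiv.swap q ⟨(q : ℕ) + 1, hq1⟩) m = pr σ m := by
  ext y
  simp only [mem_pr]
  rw [mul_swap_symm_apply]
  rw [swap_val]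
  rcases eq_or_ne (σ.symm y) q with h | h
  · rw [if_pos h]
    have hv : ((σ.symm y : Fin (2 * n)) : ℕ) = (q : ℕ) := by rw [h]
    show (q : ℕ) + 1 < m ↔ ((σ.symm y : Fin (2 * n)) : ℕ) < m
    rw [hv]
    omega
  · rw [if_neg h]
    rcases eq_or_ne (σ.symm y) (⟨(q : ℕ) + 1, hq1⟩ : Fin (2 * n)) with h2 | h2
    · rw [if_pos h2]
      have : ((σ.symm y : Fin (2 * n)) : ℕ) = (q : ℕ) + 1 := by rw [h2]
      omega
    · rw [if_neg h2]

end Final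

theorem lex_order_is_shelling (n : ℕ) (hn : 1 ≤ n) (r : ℕ)
    (F : Fin r → Equiv.Perm (Fin (2 * n)))
    (hcan : ∀ l, IsCanonical (F l))
    (hcover : ∀ d : Set (Set (Fin (2 * n))), MaxChain n d →
      ∃! l, OrbEq (chainOf (F l)) d)
    (horder : ∀ l l' : Fin r, l < l' → PermLexLt (F l) (F l')) :
    ∀ (l : Fin r) (σ : Set (Set (Fin (2 * n)))), ProperChain n σ →
      (∃ k, k < l ∧ IsFaceOf σ (chainOf (F l)) ∧ IsFaceOf σ (chainOf (F k))) →
      ∃ T' : Finset ℕ, ↑T' ⊆ Set.Icc 1 (2 * n - 1) ∧ T'.card = 2 * n - 2 ∧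
        rankSet σ ⊆ ↑T' ∧
        ∃ k', k' < l ∧ IsFaceOf (restrict (chainOf (F l)) ↑T') (chainOf (F k')) := by
  intro l σface hproper hface
  obtain ⟨k, hkl, hfl, hfk⟩ := hface
  -- the rank set is contained in Icc 1 (2n-1)
  have hRsub : rankSet σface ⊆ Set.Icc 1 (2 * n - 1) := by
    rintro m ⟨A, hA, rfl⟩
    obtain ⟨hne, hnu⟩ := hproper.2 A hA
    constructor
    · have : A.ncard ≠ 0 := by
        intro h0
        rw [Set.ncard_eq_zero (Set.toFinite A)] at h0
        rw [h0] at hne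
        exact Set.not_nonempty_empty hne
      omega
    · have hss : A ⊂ Set.univ := Set.ssubset_univ_iff.mpr hnu
      have := Set.ncard_lt_ncard hss (Set.toFinite _)
      rw [Set.ncard_univ] at this
      have h2n : Nat.card (Fin (2 * n)) = 2 * n := by simp
      omega
  have hSb1 : ∀ s ∈ rankSet σface, 1 ≤ s ∧ s ≤ 2 * n - 1 := by
    intro s hs
    have := hRsub hs
    exact ⟨this.1, this.2⟩
  -- word-level S-equivalence between F k and F l
  have horb : OrbEq (restrict (chainOf (F k)) (rankSet σface))
      (restrict (chainOf (F l)) (rankSet σface)) := orbEq_trans hfk (orbEq_symm hfl)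
  obtain ⟨g, hgpp, hgimg⟩ := horb
  have hprefix : ∀ s ∈ rankSet σface, ⇑g '' pr (F k) s = pr (F l) s := by
    intro s hs
    obtain ⟨h1, h2⟩ := hSb1 s hs
    have hmem : pr (F k) s ∈ restrict (chainOf (F k)) (rankSet σface) := by
      rw [restrict_chainOf]
      exact ⟨s, h1, h2, hs, rfl⟩
    have hmem2 : ⇑g '' pr (F k) s ∈ restrict (chainOf (F l)) (rankSet σface) := by
      rw [← hgimg]
      exact ⟨_, hmem, rfl⟩
    rw [restrict_chainOf] at hmem2
    obtain ⟨s', h1', h2', hs', heq⟩ := hmem2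
    have hcard : s = s' := by
      have hc := congrArg Set.ncard heq
      rw [Set.ncard_image_of_injective _ g.injective, pr_ncard _ (by omega),
        pr_ncard _ (by omega)] at hc
      exact hc
    rw [heq, ← hcard]
  have hgpr : ∀ s ∈ rankSet σface, Sb (F k) (F l) g s := by
    intro s hs x
    have himg := hprefix s hs
    constructor
    · intro hx
      have : g x ∈ ⇑g '' pr (F k) s := ⟨x, hx, rfl⟩
      rw [himg] at this
      exact this
    · intro hx
      have : g x ∈ ⇑g '' pr (F k) s := by rw [himg]; exact hx
      obtain ⟨y, hy, hxy⟩ := this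
      rwa [← g.injective hxy]
  have hltkl : PermLexLt (F k) (F l) := horder k l hkl
  obtain ⟨q, hq1, hqS, h, hPPh, hcanρ, hlexρ⟩ :=
    main_lemma (hcan l) (hcan k) hSb1 (PP_of_isPairPerm hgpp) hgpr hltkl
  set t : ℕ := (q : ℕ) + 1 with htdef
  set q1 : Fin (2 * n) := ⟨t, hq1⟩ with hq1def
  set σsw : Equiv.Perm (Fin (2 * n)) := (F l) * Equiv.swap q q1 with hσsw
  set T' : Finset ℕ := (Finset.Icc 1 (2 * n - 1)).erase t with hT'def
  have htIcc : t ∈ Finset.Icc 1 (2 * n - 1) := by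
    rw [Finset.mem_Icc]
    omega
  have hT'sub : (↑T' : Set ℕ) ⊆ Set.Icc 1 (2 * n - 1) := by
    intro a ha
    simp only [hT'def, Finset.coe_erase, Set.mem_diff, Finset.coe_Icc] at ha
    exact ha.1
  have hT'card : T'.card = 2 * n - 2 := by
    rw [hT'def, Finset.card_erase_of_mem htIcc, Nat.card_Icc]
    omega
  have hRT' : rankSet σface ⊆ (↑T' : Set ℕ) := by
    intro m hm
    have hIcc := hRsub hm
    simp only [hT'def, Finset.coe_erase, Set.mem_diff, Finset.coe_Icc, Set.mem_singleton_iff]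
    refine ⟨hIcc, ?_⟩
    intro hmt
    rw [hmt] at hm
    exact hqS hm
  -- the modified chain and the earlier facet containing the subfacet
  have hmax : MaxChain n (chainOf σsw) := maxChain_chainOf hn _
  obtain ⟨k', hk'orb, _⟩ := hcover _ hmax
  have horb2 : OrbEq (chainOf (F k')) (chainOf (h * σsw)) := by
    apply orbEq_trans hk'orb
    exact ⟨h, isPairPerm_of_PP hPPh, image_chainOf h σsw⟩
  obtain ⟨G, hGpp, hGim⟩ := horb2
  have hGchain : chainOf (G * F k') = chainOf (h * σsw) := by
    rw [← image_chainOf]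
    exact hGim
  have hGword : G * F k' = h * σsw := chainOf_injective hn hGchain
  have hFk' : h * σsw = F k' :=
    canon_unique (hcan k') hcanρ (PP_of_isPairPerm hGpp) hGword.symm
  have hlexk' : PermLexLt (F k') (F l) := by
    rw [← hFk']
    exact hlexρ
  have hk'l : k' < l := by
    rcases lt_trichotomy k' l with hc | hc | hc
    · exact hc
    · exfalso
      rw [hc] at hlexk'
      exact permLexLt_irrefl _ hlexk'
    · exact absurd (permLexLt_asymm hlexk' (horder l k' hc)) (fun x => x)
  refine ⟨T', hT'sub, hT'card, hRT', k', hk'l, ?_⟩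
  -- the face of F l with rank set T' is a face of F k'
  unfold IsFaceOf
  have hrk : rankSet (restrict (chainOf (F l)) (↑T' : Set ℕ)) = (↑T' : Set ℕ) := by
    rw [rankSet_restrict_chainOf]
    exact Set.inter_eq_self_of_subset_right hT'sub
  rw [hrk]
  obtain ⟨g2, hg2pp, hg2im⟩ := hk'orb
  refine ⟨g2, hg2pp, ?_⟩
  rw [image_restrict, hg2im]
  -- the two chains agree away from rank t
  rw [restrict_chainOf, restrict_chainOf]
  ext A
  simp only [Set.mem_setOf_eq]
  constructor
  · rintro ⟨m, h1, h2, hmT, rfl⟩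
    refine ⟨m, h1, h2, hmT, ?_⟩
    have hmt : m ≠ t := by
      intro hc
      rw [hT'def] at hmT
      rw [hc] at hmT
      exact (Finset.notMem_erase t _) hmT
    rw [hσsw, pr_mul_swap (F l) q hq1 hmt]
  · rintro ⟨m, h1, h2, hmT, rfl⟩
    refine ⟨m, h1, h2, hmT, ?_⟩
    have hmt : m ≠ t := by
      intro hc
      rw [hT'def] at hmT
      rw [hc] at hmT
      exact (Finset.notMem_erase t _) hmT
    rw [hσsw, pr_mul_swap (F l) q hq1 hmt]

end Stmt3
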